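/- arXiv:1912.01392 — 4 statements merged into one kernel-verified Lean document; each statement's English description precedes it below -/
import Mathlib

section
/- Let (H, m, 1, Δ, ε, S) and (H, m, 1, Δ', ε', T) be two Hopf algebra structures on the same algebra (H, m, 1) over a field k, satisfying the Hopf brace compatibility h_{1'} ⊗ h_{2'1} ⊗ h_{2'2} = h_{11'}S(h_2)h_{31'} ⊗ h_{12'} ⊗ h_{32'} for all h ∈ H. Then the two counits coincide: ε' = ε. -/
open TensorProduct

noncomputable section

namespace HopfPaper

/-- A Hopf algebra structure (comultiplication `Δ`, counit `ε`, antipode `S`) on a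
given `k`-algebra `H`, expressed in terms of `k`-linear maps.  Together with the
algebra structure of `H` this is exactly the data of a Hopf algebra
`(H, m, 1, Δ, ε, S)` over the field `k`. -/
structure HopfStruct (k : Type*) [Field k] (H : Type*) [Ring H] [Algebra k H] where
  /-- the comultiplication -/
  Δ : H →ₗ[k] H ⊗[k] H
  /-- the counit -/
  ε : H →ₗ[k] k
  /-- the antipode -/
  S : H →ₗ[k] H
  coassoc : ∀ h : H,
    TensorProduct.map (LinearMap.id : H →ₗ[k] H) Δ (Δ h)
      = TensorProduct.assoc k H H H
          (TensorProduct.map Δ (LinearMap.id : H →ₗ[k] H) (Δ h))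
  counit_left : ∀ h : H,
    TensorProduct.lid k H (TensorProduct.map ε (LinearMap.id : H →ₗ[k] H) (Δ h)) = h
  counit_right : ∀ h : H,
    TensorProduct.rid k H (TensorProduct.map (LinearMap.id : H →ₗ[k] H) ε (Δ h)) = h
  comul_mul : ∀ a b : H, Δ (a * b) = Δ a * Δ b
  comul_one : Δ 1 = 1
  counit_mul : ∀ a b : H, ε (a * b) = ε a * ε b
  counit_one : ε 1 = 1
  antipode_left : ∀ h : H,
    LinearMap.mul' k H (TensorProduct.map S (LinearMap.id : H →ₗ[k] H) (Δ h))
      = algebraMap k H (ε h)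
  antipode_right : ∀ h : H,
    LinearMap.mul' k H (TensorProduct.map (LinearMap.id : H →ₗ[k] H) S (Δ h))
      = algebraMap k H (ε h)

variable (k : Type*) [Field k]

/-- `m ↦ m ⊗ 1`. -/
def ι₁ (M N : Type*) [Ring M] [Algebra k M] [Ring N] [Algebra k N] :
    M →ₗ[k] M ⊗[k] N :=
  (TensorProduct.mk k M N).flip 1

/-- `n ↦ 1 ⊗ n`. -/
def ι₂ (M N : Type*) [Ring M] [Algebra k M] [Ring N] [Algebra k N] :
    N →ₗ[k] M ⊗[k] N :=
  TensorProduct.mk k M N 1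

/-- multiplication of three factors, `x ⊗ (y ⊗ z) ↦ x * y * z`. -/
def mul₃ (T : Type*) [Ring T] [Algebra k T] : T ⊗[k] (T ⊗[k] T) →ₗ[k] T :=
  (LinearMap.mul' k T).comp
    (TensorProduct.map (LinearMap.id : T →ₗ[k] T) (LinearMap.mul' k T))

/-- multiplication of four factors. -/
def mul₄ (T : Type*) [Ring T] [Algebra k T] :
    T ⊗[k] (T ⊗[k] (T ⊗[k] T)) →ₗ[k] T :=
  (LinearMap.mul' k T).comp
    (TensorProduct.map (LinearMap.id : T →ₗ[k] T) (mul₃ k T))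

/-- The left hand side `h_{1'} ⊗ h_{2'1} ⊗ h_{2'2}` of the Hopf brace compatibility
condition (2.1), i.e. `(id ⊗ Δ) ∘ Δ'`. -/
def braceLHS (H : Type*) [Ring H] [Algebra k H] (Δ Δ' : H →ₗ[k] H ⊗[k] H) :
    H →ₗ[k] H ⊗[k] (H ⊗[k] H) :=
  (TensorProduct.map (LinearMap.id : H →ₗ[k] H) Δ).comp Δ'

/-- The right hand side `h_{11'}S(h_2)h_{31'} ⊗ h_{12'} ⊗ h_{32'}` of the Hopf brace
compatibility condition (2.1):  it is obtained from the twofold comultiplication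
`h ↦ h_1 ⊗ (h_2 ⊗ h_3)` (using `Δ`) by applying `Δ'` to the first and third legs,
`S` to the middle leg, placing the results in the appropriate tensor positions of
`H ⊗ (H ⊗ H)` (filled with `1`s) and multiplying. -/
def braceRHS (H : Type*) [Ring H] [Algebra k H] (Δ Δ' : H →ₗ[k] H ⊗[k] H)
    (S : H →ₗ[k] H) : H →ₗ[k] H ⊗[k] (H ⊗[k] H) :=
  (mul₃ k (H ⊗[k] (H ⊗[k] H))).comp
    ((TensorProduct.map
        ((TensorProduct.map (LinearMap.id : H →ₗ[k] H) (ι₁ k H H)).comp Δ')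
        (TensorProduct.map ((ι₁ k H (H ⊗[k] H)).comp S)
          ((TensorProduct.map (LinearMap.id : H →ₗ[k] H) (ι₂ k H H)).comp Δ'))).comp
      ((TensorProduct.map (LinearMap.id : H →ₗ[k] H) Δ).comp Δ))

/-- A Hopf brace on the `k`-algebra `H` : two Hopf algebra structures sharing the
multiplication and unit of `H`, subject to the compatibility condition (2.1):
`h_{1'} ⊗ h_{2'1} ⊗ h_{2'2} = h_{11'}S(h_2)h_{31'} ⊗ h_{12'} ⊗ h_{32'}`. -/
structure HopfBrace (H : Type*) [Ring H] [Algebra k H] where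
  fst : HopfStruct k H
  snd : HopfStruct k H
  compat : ∀ h : H,
    braceLHS k H fst.Δ snd.Δ h = braceRHS k H fst.Δ snd.Δ fst.S h

/-- The coaction `ρ(h) = S(h_1) h_{21'} ⊗ h_{22'}` of Lemma 2.5. -/
def ρmap (H : Type*) [Ring H] [Algebra k H] (Δ Δ' : H →ₗ[k] H ⊗[k] H)
    (S : H →ₗ[k] H) : H →ₗ[k] H ⊗[k] H :=
  (LinearMap.mul' k (H ⊗[k] H)).comp
    ((TensorProduct.map ((ι₁ k H H).comp S) Δ').comp Δ)

/-- The coaction `φ(a) = (T(a_{1'}))_{(-1)} a_{2'} ⊗ (T(a_{1'}))_{(0)} a_{3'}`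
of Lemma 2.8(2), where `x_{(-1)} ⊗ x_{(0)} = ρ(x)`. -/
def φmap (H : Type*) [Ring H] [Algebra k H] (Δ Δ' : H →ₗ[k] H ⊗[k] H)
    (S T : H →ₗ[k] H) : H →ₗ[k] H ⊗[k] H :=
  (LinearMap.mul' k (H ⊗[k] H)).comp
    ((TensorProduct.map ((ρmap k H Δ Δ' S).comp T)
        (LinearMap.id : H ⊗[k] H →ₗ[k] H ⊗[k] H)).comp
      ((TensorProduct.map (LinearMap.id : H →ₗ[k] H) Δ').comp Δ'))

/-- `ρ : A →ₗ H ⊗ A` is a coassociative counital left coaction of the coalgebra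
`(H, ΔH, εH)`. -/
def LeftCoaction (A H : Type*) [Ring A] [Algebra k A] [Ring H] [Algebra k H]
    (ΔH : H →ₗ[k] H ⊗[k] H) (εH : H →ₗ[k] k) (ρ : A →ₗ[k] H ⊗[k] A) : Prop :=
  (∀ a : A,
    TensorProduct.map (LinearMap.id : H →ₗ[k] H) ρ (ρ a)
      = TensorProduct.assoc k H H A
          (TensorProduct.map ΔH (LinearMap.id : A →ₗ[k] A) (ρ a))) ∧
  (∀ a : A,
    TensorProduct.lid k A (TensorProduct.map εH (LinearMap.id : A →ₗ[k] A) (ρ a)) = a)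

/-- `φ : H →ₗ H ⊗ A` is a coassociative counital right coaction of the coalgebra
`(A, ΔA, εA)`. -/
def RightCoaction (A H : Type*) [Ring A] [Algebra k A] [Ring H] [Algebra k H]
    (ΔA : A →ₗ[k] A ⊗[k] A) (εA : A →ₗ[k] k) (φ : H →ₗ[k] H ⊗[k] A) : Prop :=
  (∀ h : H,
    TensorProduct.map (LinearMap.id : H →ₗ[k] H) ΔA (φ h)
      = TensorProduct.assoc k H A A
          (TensorProduct.map φ (LinearMap.id : A →ₗ[k] A) (φ h))) ∧
  (∀ h : H,
    TensorProduct.rid k H (TensorProduct.map (LinearMap.id : H →ₗ[k] H) εA (φ h)) = h)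

/-- a linear map which is moreover multiplicative and unital. -/
def IsAlgebraMorphism (M N : Type*) [Ring M] [Algebra k M] [Ring N] [Algebra k N]
    (f : M →ₗ[k] N) : Prop :=
  (∀ a b : M, f (a * b) = f a * f b) ∧ f 1 = 1

/-- `a ↦ a_{1(-1)} a_{2(-1)} ⊗ a_{1(0)} ⊗ a_{2(0)}`, the right hand side of the
comodule coalgebra condition. -/
def comodCoalgRHS (A H : Type*) [Ring A] [Algebra k A] [Ring H] [Algebra k H]
    (ΔA : A →ₗ[k] A ⊗[k] A) (ρ : A →ₗ[k] H ⊗[k] A) :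
    A →ₗ[k] H ⊗[k] (A ⊗[k] A) :=
  (LinearMap.mul' k (H ⊗[k] (A ⊗[k] A))).comp
    ((TensorProduct.map
        ((TensorProduct.map (LinearMap.id : H →ₗ[k] H) (ι₁ k A A)).comp ρ)
        ((TensorProduct.map (LinearMap.id : H →ₗ[k] H) (ι₂ k A A)).comp ρ)).comp ΔA)

/-- The two conditions making a left `H`-comodule `(A, ρ)` a comodule coalgebra:
`a_{(-1)} ⊗ Δ(a_{(0)}) = a_{1(-1)} a_{2(-1)} ⊗ a_{1(0)} ⊗ a_{2(0)}` and
`a_{(-1)} ε(a_{(0)}) = ε(a) 1`. -/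
def IsComodCoalg (A H : Type*) [Ring A] [Algebra k A] [Ring H] [Algebra k H]
    (ΔA : A →ₗ[k] A ⊗[k] A) (εA : A →ₗ[k] k) (ρ : A →ₗ[k] H ⊗[k] A) : Prop :=
  (∀ a : A,
    TensorProduct.map (LinearMap.id : H →ₗ[k] H) ΔA (ρ a)
      = comodCoalgRHS k A H ΔA ρ a) ∧
  (∀ a : A,
    TensorProduct.rid k H (TensorProduct.map (LinearMap.id : H →ₗ[k] H) εA (ρ a))
      = algebraMap k H (εA a))

/-- `a ↦ a_{1(-1)} a_{2(-1)[0]} ⊗ a_{1(0)} a_{2(-1)[1]} ⊗ a_{2(0)}`, the right hand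
side of (HM2). -/
def HM2RHS (A H : Type*) [Ring A] [Algebra k A] [Ring H] [Algebra k H]
    (ΔA : A →ₗ[k] A ⊗[k] A) (ρ : A →ₗ[k] H ⊗[k] A) (φ : H →ₗ[k] H ⊗[k] A) :
    A →ₗ[k] H ⊗[k] (A ⊗[k] A) :=
  (LinearMap.mul' k (H ⊗[k] (A ⊗[k] A))).comp
    ((TensorProduct.map
        ((TensorProduct.map (LinearMap.id : H →ₗ[k] H) (ι₁ k A A)).comp ρ)
        ((TensorProduct.assoc k H A A).toLinearMap.comp
          ((TensorProduct.map φ (LinearMap.id : A →ₗ[k] A)).comp ρ))).comp ΔA)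

/-- `h ↦ h_{1[0]} ⊗ h_{1[1](-1)} h_{2[0]} ⊗ h_{1[1](0)} h_{2[1]}`, the right hand
side of (HM3). -/
def HM3RHS (A H : Type*) [Ring A] [Algebra k A] [Ring H] [Algebra k H]
    (ΔH : H →ₗ[k] H ⊗[k] H) (ρ : A →ₗ[k] H ⊗[k] A) (φ : H →ₗ[k] H ⊗[k] A) :
    H →ₗ[k] H ⊗[k] (H ⊗[k] A) :=
  (LinearMap.mul' k (H ⊗[k] (H ⊗[k] A))).comp
    ((TensorProduct.map
        ((TensorProduct.map (LinearMap.id : H →ₗ[k] H) ρ).comp φ)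
        ((ι₂ k H (H ⊗[k] A)).comp φ)).comp ΔH)

/-- A Hopf matched pair `(A, H)` (Definition 3.1): `ρ` makes `A` a left
`H`-comodule algebra, `φ` makes `H` a right `A`-comodule algebra, and the
compatibility conditions (HM1)–(HM4) hold. -/
def IsHopfMatchedPair (A H : Type*) [Ring A] [Algebra k A] [Ring H] [Algebra k H]
    (ΔA : A →ₗ[k] A ⊗[k] A) (εA : A →ₗ[k] k)
    (ΔH : H →ₗ[k] H ⊗[k] H) (εH : H →ₗ[k] k)
    (ρ : A →ₗ[k] H ⊗[k] A) (φ : H →ₗ[k] H ⊗[k] A) : Prop :=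
  LeftCoaction k A H ΔH εH ρ ∧
  IsAlgebraMorphism k A (H ⊗[k] A) ρ ∧
  RightCoaction k A H ΔA εA φ ∧
  IsAlgebraMorphism k H (H ⊗[k] A) φ ∧
  -- (HM1)
  (∀ a : A,
    TensorProduct.rid k H (TensorProduct.map (LinearMap.id : H →ₗ[k] H) εA (ρ a))
      = algebraMap k H (εA a)) ∧
  (∀ h : H,
    TensorProduct.lid k A (TensorProduct.map εH (LinearMap.id : A →ₗ[k] A) (φ h))
      = algebraMap k A (εH h)) ∧
  -- (HM2)
  (∀ a : A,
    TensorProduct.map (LinearMap.id : H →ₗ[k] H) ΔA (ρ a) = HM2RHS k A H ΔA ρ φ a) ∧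
  -- (HM3)
  (∀ h : H,
    TensorProduct.assoc k H H A
        (TensorProduct.map ΔH (LinearMap.id : A →ₗ[k] A) (φ h))
      = HM3RHS k A H ΔH ρ φ h) ∧
  -- (HM4)
  (∀ (a : A) (h : H), φ h * ρ a = ρ a * φ h)

/-- Equation (3.2): `Δ(a) = a_{1'} T(a_{2'(-1)}) ⊗ a_{2'(0)}`. -/
def Δfromρ (A : Type*) [Ring A] [Algebra k A] (Δ' : A →ₗ[k] A ⊗[k] A)
    (T : A →ₗ[k] A) (ρ : A →ₗ[k] A ⊗[k] A) : A →ₗ[k] A ⊗[k] A :=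
  (LinearMap.mul' k (A ⊗[k] A)).comp
    ((TensorProduct.map (ι₁ k A A)
        ((TensorProduct.map T (LinearMap.id : A →ₗ[k] A)).comp ρ)).comp Δ')

/-- Equation (3.3): `S(a) = a_{(-1)} T(a_{(0)})`. -/
def Sfromρ (A : Type*) [Ring A] [Algebra k A] (T : A →ₗ[k] A)
    (ρ : A →ₗ[k] A ⊗[k] A) : A →ₗ[k] A :=
  (LinearMap.mul' k A).comp
    ((TensorProduct.map (LinearMap.id : A →ₗ[k] A) T).comp ρ)

/-- The comultiplication `Δ_R(h) = R · Δ(h) · R⁻¹` obtained by conjugating `Δ` with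
an invertible element `R ∈ H ⊗ H`. -/
def conjComul (H : Type*) [Ring H] [Algebra k H] (R Rinv : H ⊗[k] H)
    (Δ : H →ₗ[k] H ⊗[k] H) : H →ₗ[k] H ⊗[k] H :=
  (LinearMap.mulLeft k R).comp ((LinearMap.mulRight k Rinv).comp Δ)

/-- The braiding candidate `c(x ⊗ y) = x_{(-1)} y_{[0]} ⊗ x_{(0)} y_{[1]}` of
Proposition 2.9, i.e. `c = mult ∘ (ρ ⊗ φ)`. -/
def cmap (A : Type*) [Ring A] [Algebra k A] (Δ Δ' : A →ₗ[k] A ⊗[k] A)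
    (S T : A →ₗ[k] A) : A ⊗[k] A →ₗ[k] A ⊗[k] A :=
  (LinearMap.mul' k (A ⊗[k] A)).comp
    (TensorProduct.map (ρmap k A Δ Δ' S) (φmap k A Δ Δ' S T))

/-- `γ(x ⊗ y) = x y_{(-1)} ⊗ y_{(0)}` for a coaction `ρ(y) = y_{(-1)} ⊗ y_{(0)}`. -/
def γmap (A : Type*) [Ring A] [Algebra k A] (ρ : A →ₗ[k] A ⊗[k] A) :
    A ⊗[k] A →ₗ[k] A ⊗[k] A :=
  (LinearMap.mul' k (A ⊗[k] A)).comp (TensorProduct.map (ι₁ k A A) ρ)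

/-- `σ(x ⊗ y) = y_2 ⊗ x S(y_1) y_3`. -/
def σmap (A : Type*) [Ring A] [Algebra k A] (Δ : A →ₗ[k] A ⊗[k] A)
    (S : A →ₗ[k] A) : A ⊗[k] A →ₗ[k] A ⊗[k] A :=
  (mul₄ k (A ⊗[k] A)).comp
    ((TensorProduct.map (ι₂ k A A)
        (TensorProduct.map ((ι₂ k A A).comp S)
          (TensorProduct.map (ι₁ k A A) (ι₂ k A A)))).comp
      (TensorProduct.map (LinearMap.id : A →ₗ[k] A)
        ((TensorProduct.map (LinearMap.id : A →ₗ[k] A) Δ).comp Δ)))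

/-- The usual tensor product comultiplication `Δ̂` on `A ⊗ H`:
`a ⊗ h ↦ (a_1 ⊗ h_1) ⊗ (a_2 ⊗ h_2)`. -/
def hatΔ (A H : Type*) [Ring A] [Algebra k A] [Ring H] [Algebra k H]
    (ΔA : A →ₗ[k] A ⊗[k] A) (ΔH : H →ₗ[k] H ⊗[k] H) :
    A ⊗[k] H →ₗ[k] (A ⊗[k] H) ⊗[k] (A ⊗[k] H) :=
  (TensorProduct.tensorTensorTensorComm k A A H H).toLinearMap.comp
    (TensorProduct.map ΔA ΔH)

/-- The bicrossed coproduct comultiplication on `A ⊗ H`: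
`Δ̃(a ⊗ h) = a_1 ⊗ a_{2(-1)} h_{1[0]} ⊗ a_{2(0)} h_{1[1]} ⊗ h_2`. -/
def bicrossΔ (A H : Type*) [Ring A] [Algebra k A] [Ring H] [Algebra k H]
    (ΔA : A →ₗ[k] A ⊗[k] A) (ΔH : H →ₗ[k] H ⊗[k] H)
    (ρ : A →ₗ[k] H ⊗[k] A) (φ : H →ₗ[k] H ⊗[k] A) :
    A ⊗[k] H →ₗ[k] (A ⊗[k] H) ⊗[k] (A ⊗[k] H) :=
  (LinearMap.mul' k ((A ⊗[k] H) ⊗[k] (A ⊗[k] H))).comp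
    (TensorProduct.map
      -- a ↦ (a_1 ⊗ a_{2(-1)}) ⊗ (a_{2(0)} ⊗ 1)
      ((TensorProduct.map (LinearMap.id : A ⊗[k] H →ₗ[k] A ⊗[k] H) (ι₁ k A H)).comp
        ((TensorProduct.assoc k A H A).symm.toLinearMap.comp
          ((TensorProduct.map (LinearMap.id : A →ₗ[k] A) ρ).comp ΔA)))
      -- h ↦ (1 ⊗ h_{1[0]}) ⊗ (h_{1[1]} ⊗ h_2)
      ((TensorProduct.map (ι₂ k A H) (LinearMap.id : A ⊗[k] H →ₗ[k] A ⊗[k] H)).comp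
        ((TensorProduct.assoc k H A H).toLinearMap.comp
          ((TensorProduct.map φ (LinearMap.id : H →ₗ[k] H)).comp ΔH))))

/-- The antipode of the bicrossed coproduct:
`S̃(a ⊗ h) = S_A(h_{[1]}) S_A(a_{(0)}) ⊗ S_H(h_{[0]}) S_H(a_{(-1)})`. -/
def bicrossS (A H : Type*) [Ring A] [Algebra k A] [Ring H] [Algebra k H]
    (SA : A →ₗ[k] A) (SH : H →ₗ[k] H)
    (ρ : A →ₗ[k] H ⊗[k] A) (φ : H →ₗ[k] H ⊗[k] A) :
    A ⊗[k] H →ₗ[k] A ⊗[k] H :=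
  (LinearMap.mul' k (A ⊗[k] H)).comp
    ((TensorProduct.map
        ((TensorProduct.map SA SH).comp ((TensorProduct.comm k H A).toLinearMap.comp φ))
        ((TensorProduct.map SA SH).comp ((TensorProduct.comm k H A).toLinearMap.comp ρ))).comp
      (TensorProduct.comm k A H).toLinearMap)

/-- The left hand side `h_{[0]} ⊗ h_{[1]1} ⊗ h_{[1]2}` of equation (4.1), where the
`A`-leg is comultiplied with `Δ'`. -/
def eq41LHS (A H : Type*) [Ring A] [Algebra k A] [Ring H] [Algebra k H]
    (Δ'A : A →ₗ[k] A ⊗[k] A) (φ : H →ₗ[k] H ⊗[k] A) :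
    H →ₗ[k] H ⊗[k] (A ⊗[k] A) :=
  (TensorProduct.map (LinearMap.id : H →ₗ[k] H) Δ'A).comp φ

/-- The right hand side `h_{1[0]} S(h_2) h_{3[0]} ⊗ h_{1[1]} ⊗ h_{3[1]}` of
equation (4.1). -/
def eq41RHS (A H : Type*) [Ring A] [Algebra k A] [Ring H] [Algebra k H]
    (ΔH : H →ₗ[k] H ⊗[k] H) (SH : H →ₗ[k] H) (φ : H →ₗ[k] H ⊗[k] A) :
    H →ₗ[k] H ⊗[k] (A ⊗[k] A) :=
  (mul₃ k (H ⊗[k] (A ⊗[k] A))).comp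
    ((TensorProduct.map
        ((TensorProduct.map (LinearMap.id : H →ₗ[k] H) (ι₁ k A A)).comp φ)
        (TensorProduct.map ((ι₁ k H (A ⊗[k] A)).comp SH)
          ((TensorProduct.map (LinearMap.id : H →ₗ[k] H) (ι₂ k A A)).comp φ))).comp
      ((TensorProduct.map (LinearMap.id : H →ₗ[k] H) ΔH).comp ΔH))

/-- `x ↦ x_{11'} S(x_2) ⊗ x_{12'} ⊗ 1 ∈ H ⊗ (H ⊗ A)`, an auxiliary map for
equations (4.2) and (4.3). -/
def LHmap (A H : Type*) [Ring A] [Algebra k A] [Ring H] [Algebra k H]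
    (ΔH Δ'H : H →ₗ[k] H ⊗[k] H) (SH : H →ₗ[k] H) :
    H →ₗ[k] H ⊗[k] (H ⊗[k] A) :=
  (LinearMap.mul' k (H ⊗[k] (H ⊗[k] A))).comp
    ((TensorProduct.map
        ((TensorProduct.map (LinearMap.id : H →ₗ[k] H) (ι₁ k H A)).comp Δ'H)
        ((ι₁ k H (H ⊗[k] A)).comp SH)).comp ΔH)

/-- The right hand side
`a_{(-1)11'} S(a_{(-1)2}) a_{(0)(-1)'} ⊗ a_{(-1)12'} ⊗ a_{(0)(0)'}` of
equation (4.2). -/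
def eq42RHS (A H : Type*) [Ring A] [Algebra k A] [Ring H] [Algebra k H]
    (ΔH Δ'H : H →ₗ[k] H ⊗[k] H) (SH : H →ₗ[k] H)
    (ρ ρ' : A →ₗ[k] H ⊗[k] A) :
    A →ₗ[k] H ⊗[k] (H ⊗[k] A) :=
  (LinearMap.mul' k (H ⊗[k] (H ⊗[k] A))).comp
    ((TensorProduct.map (LHmap k A H ΔH Δ'H SH)
        ((TensorProduct.map (LinearMap.id : H →ₗ[k] H) (ι₂ k H A)).comp ρ')).comp ρ)

/-- The right hand side
`h_{1[0]11'} S(h_{1[0]2}) h_{1[1](-1)'} h_2 ⊗ h_{1[0]12'} ⊗ h_{1[1](0)'}` of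
equation (4.3). -/
def eq43RHS (A H : Type*) [Ring A] [Algebra k A] [Ring H] [Algebra k H]
    (ΔH Δ'H : H →ₗ[k] H ⊗[k] H) (SH : H →ₗ[k] H)
    (ρ' : A →ₗ[k] H ⊗[k] A) (φ : H →ₗ[k] H ⊗[k] A) :
    H →ₗ[k] H ⊗[k] (H ⊗[k] A) :=
  (LinearMap.mul' k (H ⊗[k] (H ⊗[k] A))).comp
    ((TensorProduct.map
        ((LinearMap.mul' k (H ⊗[k] (H ⊗[k] A))).comp
          ((TensorProduct.map (LHmap k A H ΔH Δ'H SH)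
              ((TensorProduct.map (LinearMap.id : H →ₗ[k] H) (ι₂ k H A)).comp ρ')).comp φ))
        (ι₁ k H (H ⊗[k] A))).comp ΔH)

section CounitsAux

variable {k : Type*} [Field k] {H : Type*} [Ring H] [Algebra k H]

lemma muk_map_id_lid (f : H →ₗ[k] k) (x : k ⊗[k] H) :
    LinearMap.mul' k k (TensorProduct.map (LinearMap.id : k →ₗ[k] k) f x)
      = f (TensorProduct.lid k H x) := by
  induction x using TensorProduct.induction_on with
  | zero => simp
  | tmul c b =>
      simp [TensorProduct.map_tmul, LinearMap.mul'_apply, TensorProduct.lid_tmul,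
        map_smul, smul_eq_mul]
  | add x y hx hy => simp [map_add, hx, hy]

lemma muk_map_id_rid (f : H →ₗ[k] k) (x : H ⊗[k] k) :
    LinearMap.mul' k k (TensorProduct.map f (LinearMap.id : k →ₗ[k] k) x)
      = f (TensorProduct.rid k H x) := by
  induction x using TensorProduct.induction_on with
  | zero => simp
  | tmul b c =>
      simp [TensorProduct.map_tmul, LinearMap.mul'_apply, TensorProduct.rid_tmul,
        map_smul, smul_eq_mul, mul_comm]
  | add x y hx hy => simp [map_add, hx, hy]

lemma counitL (hS : HopfStruct k H) (f : H →ₗ[k] k) (h : H) :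
    LinearMap.mul' k k (TensorProduct.map hS.ε f (hS.Δ h)) = f h := by
  have hdec : (TensorProduct.map hS.ε f : H ⊗[k] H →ₗ[k] k ⊗[k] k)
      = (TensorProduct.map (LinearMap.id : k →ₗ[k] k) f).comp
          (TensorProduct.map hS.ε (LinearMap.id : H →ₗ[k] H)) := by
    rw [← TensorProduct.map_comp]; simp
  rw [hdec, LinearMap.comp_apply, muk_map_id_lid, hS.counit_left]

lemma counitR (hS : HopfStruct k H) (f : H →ₗ[k] k) (h : H) :
    LinearMap.mul' k k (TensorProduct.map f hS.ε (hS.Δ h)) = f h := by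
  have hdec : (TensorProduct.map f hS.ε : H ⊗[k] H →ₗ[k] k ⊗[k] k)
      = (TensorProduct.map f (LinearMap.id : k →ₗ[k] k)).comp
          (TensorProduct.map (LinearMap.id : H →ₗ[k] H) hS.ε) := by
    rw [← TensorProduct.map_comp]; simp
  rw [hdec, LinearMap.comp_apply, muk_map_id_rid, hS.counit_right]

lemma eps_mul (hS : HopfStruct k H) (x : H ⊗[k] H) :
    hS.ε (LinearMap.mul' k H x)
      = LinearMap.mul' k k (TensorProduct.map hS.ε hS.ε x) := by
  induction x using TensorProduct.induction_on with
  | zero => simp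
  | tmul a b => simp [TensorProduct.map_tmul, LinearMap.mul'_apply, hS.counit_mul]
  | add x y hx hy => simp [map_add, hx, hy]

/-- multiplicativity of `μₖ ∘ (f ⊗ g)` for multiplicative `f`, `g`. -/
lemma mul_map_mul {A B : Type*} [Ring A] [Algebra k A] [Ring B] [Algebra k B]
    (f : A →ₗ[k] k) (g : B →ₗ[k] k)
    (hf : ∀ a b, f (a * b) = f a * f b) (hg : ∀ a b, g (a * b) = g a * g b)
    (x y : A ⊗[k] B) :
    LinearMap.mul' k k (TensorProduct.map f g (x * y))
      = LinearMap.mul' k k (TensorProduct.map f g x)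
          * LinearMap.mul' k k (TensorProduct.map f g y) := by
  induction x using TensorProduct.induction_on with
  | zero => simp
  | tmul a b =>
      induction y using TensorProduct.induction_on with
      | zero => simp
      | tmul c d =>
          simp [Algebra.TensorProduct.tmul_mul_tmul, TensorProduct.map_tmul,
            LinearMap.mul'_apply, hf, hg]
          ring
      | add y z hy hz => simp [mul_add, map_add, hy, hz]
  | add x x' hx hx' => simp [add_mul, map_add, hx, hx']

/-- the functional `G = ε' ⊗ ε ⊗ ε` on `H ⊗ (H ⊗ H)`. -/
def Gmap (hA hB : HopfStruct k H) : H ⊗[k] (H ⊗[k] H) →ₗ[k] k :=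
  (LinearMap.mul' k k).comp
    (TensorProduct.map hB.ε
      ((LinearMap.mul' k k).comp (TensorProduct.map hA.ε hA.ε)))

lemma Gmap_tmul (hA hB : HopfStruct k H) (a : H) (y : H ⊗[k] H) :
    Gmap hA hB (a ⊗ₜ[k] y)
      = hB.ε a * LinearMap.mul' k k (TensorProduct.map hA.ε hA.ε y) := by
  simp [Gmap, TensorProduct.map_tmul, LinearMap.mul'_apply]

lemma Gmap_mul (hA hB : HopfStruct k H) (x y : H ⊗[k] (H ⊗[k] H)) :
    Gmap hA hB (x * y) = Gmap hA hB x * Gmap hA hB y := by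
  have hinner : ∀ a b : H ⊗[k] H,
      ((LinearMap.mul' k k).comp (TensorProduct.map hA.ε hA.ε)) (a * b)
        = ((LinearMap.mul' k k).comp (TensorProduct.map hA.ε hA.ε)) a
            * ((LinearMap.mul' k k).comp (TensorProduct.map hA.ε hA.ε)) b := by
    intro a b
    simpa using mul_map_mul hA.ε hA.ε hA.counit_mul hA.counit_mul a b
  simpa [Gmap] using
    mul_map_mul hB.ε ((LinearMap.mul' k k).comp (TensorProduct.map hA.ε hA.ε))
      hB.counit_mul hinner x y

lemma mul3kk_tmul (c : k) (z : k ⊗[k] k) :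
    mul₃ k k (c ⊗ₜ[k] z) = c * LinearMap.mul' k k z := by
  simp [mul₃, TensorProduct.map_tmul, LinearMap.mul'_apply]

lemma Gmap_mul3 (hA hB : HopfStruct k H)
    (z : (H ⊗[k] (H ⊗[k] H)) ⊗[k] ((H ⊗[k] (H ⊗[k] H)) ⊗[k] (H ⊗[k] (H ⊗[k] H)))) :
    Gmap hA hB (mul₃ k (H ⊗[k] (H ⊗[k] H)) z)
      = mul₃ k k (TensorProduct.map (Gmap hA hB)
          (TensorProduct.map (Gmap hA hB) (Gmap hA hB)) z) := by
  induction z using TensorProduct.induction_on with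
  | zero =>
      rw [LinearMap.map_zero, LinearMap.map_zero, LinearMap.map_zero,
        LinearMap.map_zero]
  | tmul t w =>
      induction w using TensorProduct.induction_on with
      | zero =>
          rw [TensorProduct.tmul_zero, LinearMap.map_zero, LinearMap.map_zero,
            LinearMap.map_zero, LinearMap.map_zero]
      | tmul u v =>
          simp [mul₃, TensorProduct.map_tmul, LinearMap.mul'_apply, Gmap_mul,
            mul_assoc]
      | add w w' hw hw' =>
          simp only [TensorProduct.tmul_add, map_add] at *
          rw [hw, hw']
  | add z z' hz hz' =>
      simp only [map_add] at *
      rw [hz, hz']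

end CounitsAux

/-- Remark 2.2(1).  If `(H, m, 1, Δ, ε, S)` and
`(H, m, 1, Δ', ε', T)` are two Hopf algebra structures on the same `k`-algebra
`(H, m, 1)` satisfying the Hopf brace compatibility (2.1)
`h_{1'} ⊗ h_{2'1} ⊗ h_{2'2} = h_{11'}S(h_2)h_{31'} ⊗ h_{12'} ⊗ h_{32'}`,
then the two counits coincide: `ε' = ε`. -/
theorem counits_coincide {k : Type*} [Field k] {H : Type*} [Ring H] [Algebra k H]
    (hA hB : HopfStruct k H)
    (compat : ∀ h : H,
      braceLHS k H hA.Δ hB.Δ h = braceRHS k H hA.Δ hB.Δ hA.S h) :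
    hB.ε = hA.ε := by
  -- The functional `G = ε' ⊗ ε ⊗ ε` applied to the compatibility gives
  -- `ε(h) = ε'(S h)`; then `ε' = ε` follows from the antipode axiom.
  set G := Gmap hA hB with hGdef
  have stepA : ∀ h : H, hA.ε h = hB.ε (hA.S h) := by
    intro h
    have key := congrArg G (compat h)
    -- left hand side
    have haux1 : ∀ x : H ⊗[k] H,
        G (TensorProduct.map (LinearMap.id : H →ₗ[k] H) hA.Δ x)
          = LinearMap.mul' k k (TensorProduct.map hB.ε hA.ε x) := by
      intro x
      induction x using TensorProduct.induction_on with
      | zero => simp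
      | tmul a b =>
          rw [TensorProduct.map_tmul, TensorProduct.map_tmul]
          simp only [LinearMap.id_apply]
          rw [hGdef, Gmap_tmul, counitL hA hA.ε b, LinearMap.mul'_apply]
      | add x y hx hy => simp only [map_add, hx, hy]
    have hL : G (braceLHS k H hA.Δ hB.Δ h) = hA.ε h := by
      rw [braceLHS, LinearMap.comp_apply, haux1, counitL hB hA.ε]
    -- the three legs of the right hand side
    have hGP : (G.comp ((TensorProduct.map (LinearMap.id : H →ₗ[k] H)
        (ι₁ k H H)).comp hB.Δ)) = hA.ε := by
      apply LinearMap.ext; intro a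
      have haux : ∀ x : H ⊗[k] H,
          G (TensorProduct.map (LinearMap.id : H →ₗ[k] H) (ι₁ k H H) x)
            = LinearMap.mul' k k (TensorProduct.map hB.ε hA.ε x) := by
        intro x
        induction x using TensorProduct.induction_on with
        | zero => simp
        | tmul c b =>
            rw [TensorProduct.map_tmul, TensorProduct.map_tmul]
            simp only [LinearMap.id_apply]
            rw [hGdef, Gmap_tmul, LinearMap.mul'_apply]
            simp [ι₁, TensorProduct.map_tmul, LinearMap.mul'_apply, hA.counit_one]
        | add x y hx hy => simp only [map_add, hx, hy]
      simp only [LinearMap.comp_apply]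
      rw [haux, counitL hB hA.ε]
    have hGQ : (G.comp ((ι₁ k H (H ⊗[k] H)).comp hA.S)) = hB.ε.comp hA.S := by
      apply LinearMap.ext; intro a
      simp only [LinearMap.comp_apply]
      rw [hGdef]
      have hone : (1 : H ⊗[k] H) = (1 : H) ⊗ₜ[k] (1 : H) :=
        Algebra.TensorProduct.one_def
      simp [ι₁, Gmap_tmul, hone, TensorProduct.map_tmul, LinearMap.mul'_apply,
        hA.counit_one]
    have hGR : (G.comp ((TensorProduct.map (LinearMap.id : H →ₗ[k] H)
        (ι₂ k H H)).comp hB.Δ)) = hA.ε := by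
      apply LinearMap.ext; intro a
      have haux : ∀ x : H ⊗[k] H,
          G (TensorProduct.map (LinearMap.id : H →ₗ[k] H) (ι₂ k H H) x)
            = LinearMap.mul' k k (TensorProduct.map hB.ε hA.ε x) := by
        intro x
        induction x using TensorProduct.induction_on with
        | zero => simp
        | tmul c b =>
            rw [TensorProduct.map_tmul, TensorProduct.map_tmul]
            simp only [LinearMap.id_apply]
            rw [hGdef, Gmap_tmul, LinearMap.mul'_apply]
            simp [ι₂, TensorProduct.map_tmul, LinearMap.mul'_apply, hA.counit_one]
        | add x y hx hy => simp only [map_add, hx, hy]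
      simp only [LinearMap.comp_apply]
      rw [haux, counitL hB hA.ε]
    -- right hand side
    have hR : G (braceRHS k H hA.Δ hB.Δ hA.S h) = hB.ε (hA.S h) := by
      rw [braceRHS]
      simp only [LinearMap.comp_apply]
      rw [hGdef, Gmap_mul3, ← hGdef]
      rw [← LinearMap.comp_apply (TensorProduct.map G (TensorProduct.map G G)),
        ← TensorProduct.map_comp, ← TensorProduct.map_comp, hGP, hGQ, hGR]
      have haux2 : ∀ x : H ⊗[k] H,
          mul₃ k k (TensorProduct.map hA.ε
              (TensorProduct.map (hB.ε.comp hA.S) hA.ε)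
              (TensorProduct.map (LinearMap.id : H →ₗ[k] H) hA.Δ x))
            = LinearMap.mul' k k
                (TensorProduct.map hA.ε (hB.ε.comp hA.S) x) := by
        intro x
        induction x using TensorProduct.induction_on with
        | zero => simp
        | tmul a b =>
            rw [TensorProduct.map_tmul]
            simp only [LinearMap.id_apply]
            rw [TensorProduct.map_tmul, mul3kk_tmul, counitR hA (hB.ε.comp hA.S) b,
              TensorProduct.map_tmul, LinearMap.mul'_apply]
        | add x y hx hy => simp only [map_add, hx, hy]
      rw [← LinearMap.comp_apply (TensorProduct.map hA.ε _) (TensorProduct.map _ hA.Δ)]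
      simp only [LinearMap.comp_apply]
      rw [haux2, counitL hA (hB.ε.comp hA.S)]
      rfl
    rw [hL, hR] at key
    exact key
  have hTS : hB.ε.comp hA.S = hA.ε := by
    apply LinearMap.ext; intro h
    exact (stepA h).symm
  apply LinearMap.ext; intro h
  have hm := congrArg hB.ε (hA.antipode_left h)
  have hr : hB.ε (algebraMap k H (hA.ε h)) = hA.ε h := by
    rw [Algebra.algebraMap_eq_smul_one, map_smul, hB.counit_one, smul_eq_mul,
      mul_one]
  rw [hr, eps_mul hB] at hm
  have hswap : TensorProduct.map hB.ε hB.ε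
      (TensorProduct.map hA.S (LinearMap.id : H →ₗ[k] H) (hA.Δ h))
        = TensorProduct.map hA.ε hB.ε (hA.Δ h) := by
    rw [← LinearMap.comp_apply, ← TensorProduct.map_comp, hTS, LinearMap.comp_id]
  rw [hswap, counitL hA hB.ε] at hm
  exact hm


end HopfPaper
end
end

section
/- Let (H, Δ, ε, S) be a Hopf algebra over a field k and let R = Σ R'_i ⊗ R''_i ∈ H ⊗ H be an invertible element (with inverse R⁻¹) satisfying the Long copairing conditions: (LC1) (R'_i)x ⊗ R''_i = x(R'_i) ⊗ R''_i for all x ∈ H; (LC2) ε(R'_i)R''_i = 1; (LC3) (Δ ⊗ id)(R) = Σ R'_i ⊗ r'_i ⊗ r''_i R''_i; (LC4) R'_i ε(R''_i) = 1; (LC5) (id ⊗ Δ)(R) = Σ R'_i r'_i ⊗ R''_i ⊗ r''_i, where r is a second copy of R. Define Δ_R(h) = Σ R'_i h_1 (R'_i)⁻¹ ⊗ R''_i h_2 (R''_i)⁻¹ (conjugation of Δ(h) by R in H ⊗ H), which makes (H, Δ_R, ε) a Hopf algebra with antipode S^R(x) = R'_i S(R''_i) S(x) S((R'_i)⁻¹)(R''_i)⁻¹.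 Then (H, Δ, Δ_R) is a Hopf brace, i.e. h_{1_R} ⊗ (h_{2_R})_1 ⊗ (h_{2_R})_2 = h_{1 1_R} S(h_2) h_{3 1_R} ⊗ h_{1 2_R} ⊗ h_{3 2_R} for all h ∈ H, where Δ_R(h) = h_{1_R} ⊗ h_{2_R}. -/
open TensorProduct

noncomputable section

namespace HopfPaper

variable (k : Type*) [Field k]

/-!
Conjugation by `R` is a Drinfeld twist. By (LC1) the legs `R₁₂` and `R₂₃` commute, so (LC3) and
(LC5) give the cocycle identity `R₁₂ (Δ ⊗ id)(R) = R₂₃ (id ⊗ Δ)(R)`, which makes `Δ_R = R Δ R⁻¹`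
coassociative, while (LC2) and (LC4) keep `ε` a counit. For `S^R = u S(-) w` with `u = R' S(R'')`
and `w = S(R⁻¹') R⁻¹''`, both antipode identities collapse to `u w = 1`. Again by (LC1),
multiplication `m : H ⊗ H → H` is multiplicative against `R`, and the antipode axioms applied to
(LC5) and (LC3) give `m(R) u = 1` and `w m(R⁻¹) = 1`; hence `u = m(R⁻¹)`, `w = m(R)` and `u w = 1`.

`H` is a Hopf brace over itself, and replacing `Δ'` by `R Δ' R⁻¹` conjugates both sides of the
brace identity by the same element `R₁₂ R₁₃`: the left side by (LC5), the right side because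
(LC1) lets `R₁₃` and `R⁻¹₁₂` move past the legs they do not share.
-/

theorem map_eq_of_mul_eq_one {M N F : Type*} [Monoid M] [Monoid N] [FunLike F M N]
    [MonoidHomClass F M N] (f : F) {R P : M} {Y : N} (hPR : P * R = 1) (hY : f R * Y = 1) :
    f P = Y :=
  left_inv_eq_right_inv (by rw [← map_mul, hPR, map_one]) hY

section TensorAlgebra
variable {k} {A : Type*} [Ring A] [Algebra k A]

theorem mul'_map_mulLeft_comp {M N : Type*} [AddCommGroup M] [Module k M] [AddCommGroup N]
    [Module k N] (c : A) (f : M →ₗ[k] A) (g : N →ₗ[k] A) (t : M ⊗[k] N) :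
    LinearMap.mul' k A (map (LinearMap.mulLeft k c ∘ₗ f) g t)
      = c * LinearMap.mul' k A (map f g t) := by
  induction t using TensorProduct.induction_on <;> simp_all [mul_add, mul_assoc]

@[simp] theorem ι₁_apply {B : Type*} [Ring B] [Algebra k B] (a : A) :
    ι₁ k A B a = a ⊗ₜ[k] (1 : B) := rfl

theorem mul₃_tmul (a : A) (t : A ⊗[k] A) :
    mul₃ k A (a ⊗ₜ[k] t) = a * LinearMap.mul' k A t := rfl

theorem assoc_mul {B C : Type*} [Ring B] [Algebra k B] [Ring C] [Algebra k C]
    (x y : (A ⊗[k] B) ⊗[k] C) :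
    TensorProduct.assoc k A B C (x * y)
      = TensorProduct.assoc k A B C x * TensorProduct.assoc k A B C y :=
  map_mul (Algebra.TensorProduct.assoc k k k A B C) x y

end TensorAlgebra

section Legs
variable {k} {H : Type*} [Ring H] [Algebra k H]

def leg₁₂ : H ⊗[k] H →ₐ[k] H ⊗[k] (H ⊗[k] H) :=
  Algebra.TensorProduct.map (AlgHom.id k H) Algebra.TensorProduct.includeLeft

def leg₁₃ : H ⊗[k] H →ₐ[k] H ⊗[k] (H ⊗[k] H) :=
  Algebra.TensorProduct.map (AlgHom.id k H) Algebra.TensorProduct.includeRight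

def leg₂₃ : H ⊗[k] H →ₐ[k] H ⊗[k] (H ⊗[k] H) := Algebra.TensorProduct.includeRight

@[simp] theorem leg₁₂_tmul (x y : H) : leg₁₂ (x ⊗ₜ[k] y) = x ⊗ₜ[k] (y ⊗ₜ[k] (1 : H)) := rfl

@[simp] theorem leg₁₃_tmul (x y : H) : leg₁₃ (x ⊗ₜ[k] y) = x ⊗ₜ[k] ((1 : H) ⊗ₜ[k] y) := rfl

@[simp] theorem leg₂₃_apply (t : H ⊗[k] H) : leg₂₃ t = (1 : H) ⊗ₜ[k] t := rfl

theorem assoc_tmul_one (t : H ⊗[k] H) :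
    TensorProduct.assoc k H H H (t ⊗ₜ[k] (1 : H)) = leg₁₂ t := by
  induction t using TensorProduct.induction_on with
  | zero => simp
  | add s t h₁ h₂ => simp [add_tmul, h₁, h₂]
  | tmul x y => rfl

theorem leg₁₂_mul_one_tmul_one_tmul (x : H ⊗[k] H) (y : H) :
    leg₁₂ x * ((1 : H) ⊗ₜ[k] ((1 : H) ⊗ₜ[k] y)) = TensorProduct.assoc k H H H (x ⊗ₜ[k] y) := by
  induction x using TensorProduct.induction_on with
  | zero => simp
  | add s t h₁ h₂ => simp only [map_add, add_mul, add_tmul, h₁, h₂]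
  | tmul a b => simp [Algebra.TensorProduct.tmul_mul_tmul]

theorem commute_leg₂₃_tmul_one_leg₁₃ (y : H) (t : H ⊗[k] H) :
    Commute (leg₂₃ (y ⊗ₜ[k] (1 : H))) (leg₁₃ t) := by
  induction t using TensorProduct.induction_on with
  | zero => simp
  | add s t h₁ h₂ => simpa using h₁.add_right h₂
  | tmul a b => simp [Commute, SemiconjBy, Algebra.TensorProduct.tmul_mul_tmul]

theorem commute_leg₁₂_leg₂₃_one_tmul (y : H) (t : H ⊗[k] H) :
    Commute (leg₁₂ t) (leg₂₃ ((1 : H) ⊗ₜ[k] y)) := by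
  induction t using TensorProduct.induction_on with
  | zero => simp
  | add s t h₁ h₂ => simpa using h₁.add_left h₂
  | tmul a b => simp [Commute, SemiconjBy, Algebra.TensorProduct.tmul_mul_tmul]

theorem commute_leg₁₂_tmul_one_leg₂₃ (x : H) (t : H ⊗[k] H) :
    Commute (leg₁₂ (x ⊗ₜ[k] (1 : H))) (leg₂₃ t) := by
  simp [Commute, SemiconjBy, Algebra.TensorProduct.tmul_mul_tmul, ← Algebra.TensorProduct.one_def]

/-- Condition (LC1): `R'x ⊗ R'' = xR' ⊗ R''`. -/
def FirstLegCentral (R : H ⊗[k] H) : Prop := ∀ x : H, Commute R (x ⊗ₜ[k] (1 : H))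

namespace FirstLegCentral
variable {R : H ⊗[k] H}

theorem of_mul_eq_one (hR : FirstLegCentral R) {P : H ⊗[k] H} (hRP : R * P = 1)
    (hPR : P * R = 1) : FirstLegCentral P :=
  fun x => Commute.units_inv_left (u := ⟨R, P, hRP, hPR⟩) (hR x)

theorem map_mulRight {N : Type*} [AddCommGroup N] [Module k N] (hR : FirstLegCentral R)
    (x : H) (g : H →ₗ[k] N) :
    map (LinearMap.mulRight k x) g R = map (LinearMap.mulLeft k x) g R := by
  have h := congrArg (map LinearMap.id g) (hR x)
  rw [← LinearMap.mulRight_apply k, ← LinearMap.mulLeft_apply k, LinearMap.mulRight_tmul,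
    LinearMap.mulLeft_tmul, LinearMap.mulRight_one, LinearMap.mulLeft_one] at h
  simpa only [← LinearMap.comp_apply, ← map_comp, LinearMap.id_comp, LinearMap.comp_id] using h

theorem mul'_map_mulRight (hR : FirstLegCentral R) (x : H) (g : H →ₗ[k] H) :
    LinearMap.mul' k H (map (LinearMap.mulRight k x) g R)
      = x * LinearMap.mul' k H (map LinearMap.id g R) := by
  rw [hR.map_mulRight, ← mul'_map_mulLeft_comp, LinearMap.comp_id]

theorem commute_leg₁₂_leg₁₃ (hR : FirstLegCentral R) (t : H ⊗[k] H) :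
    Commute (leg₁₂ t) (leg₁₃ R) := by
  induction t using TensorProduct.induction_on with
  | zero => simp
  | add s t h₁ h₂ => simpa using h₁.add_left h₂
  | tmul x y =>
    have hxy : leg₁₂ (x ⊗ₜ[k] y) = leg₁₃ (x ⊗ₜ[k] (1 : H)) * leg₂₃ (y ⊗ₜ[k] (1 : H)) := by
      simp [Algebra.TensorProduct.tmul_mul_tmul]
    rw [hxy]
    exact ((hR x).symm.map leg₁₃).mul_left (commute_leg₂₃_tmul_one_leg₁₃ y R)

theorem commute_leg₁₃_leg₁₂ (hR : FirstLegCentral R) (t : H ⊗[k] H) :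
    Commute (leg₁₃ t) (leg₁₂ R) := by
  induction t using TensorProduct.induction_on with
  | zero => simp
  | add s t h₁ h₂ => simpa using h₁.add_left h₂
  | tmul x y =>
    have hxy : leg₁₃ (x ⊗ₜ[k] y) = leg₁₂ (x ⊗ₜ[k] (1 : H)) * leg₂₃ ((1 : H) ⊗ₜ[k] y) := by
      simp [Algebra.TensorProduct.tmul_mul_tmul]
    rw [hxy]
    exact ((hR x).symm.map leg₁₂).mul_left (commute_leg₁₂_leg₂₃_one_tmul y R).symm

theorem commute_leg₁₂_leg₂₃ (hR : FirstLegCentral R) (t : H ⊗[k] H) :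
    Commute (leg₁₂ t) (leg₂₃ R) := by
  induction t using TensorProduct.induction_on with
  | zero => simp
  | add s t h₁ h₂ => simpa using h₁.add_left h₂
  | tmul x y =>
    have hxy : leg₁₂ (x ⊗ₜ[k] y) = leg₁₂ (x ⊗ₜ[k] (1 : H)) * leg₂₃ (y ⊗ₜ[k] (1 : H)) := by
      simp [Algebra.TensorProduct.tmul_mul_tmul]
    rw [hxy]
    exact (commute_leg₁₂_tmul_one_leg₂₃ x R).mul_left ((hR y).symm.map leg₂₃)

theorem mul'_mul (hR : FirstLegCentral R) (s : H ⊗[k] H) :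
    LinearMap.mul' k H (s * R) = LinearMap.mul' k H s * LinearMap.mul' k H R := by
  induction s using TensorProduct.induction_on with
  | zero => simp
  | add s₁ s₂ h₁ h₂ => simp only [map_add, add_mul, h₁, h₂]
  | tmul a b =>
    have key : ∀ t : H ⊗[k] H, LinearMap.mul' k H ((a ⊗ₜ[k] b) * t)
        = a * LinearMap.mul' k H (map (LinearMap.mulRight k b) LinearMap.id t) := by
      intro t
      induction t using TensorProduct.induction_on with
      | zero => simp
      | add t₁ t₂ h₁ h₂ => simp only [map_add, mul_add, h₁, h₂]
      | tmul c d => simp [Algebra.TensorProduct.tmul_mul_tmul, mul_assoc]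
    rw [key, hR.mul'_map_mulRight, map_id, LinearMap.id_apply, LinearMap.mul'_apply, mul_assoc]

theorem mul₃_leg₁₂_mul_leg₁₃ (hR : FirstLegCentral R) (φ : H →ₗ[k] H) (s : H ⊗[k] H) :
    mul₃ k H (map LinearMap.id (map LinearMap.id φ) (leg₁₂ s * leg₁₃ R))
      = LinearMap.mul' k H s * LinearMap.mul' k H (map LinearMap.id φ R) := by
  induction s using TensorProduct.induction_on with
  | zero => simp
  | add s₁ s₂ h₁ h₂ => simp only [map_add, add_mul, h₁, h₂]
  | tmul a b =>
    have key : ∀ t : H ⊗[k] H,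
        mul₃ k H (map LinearMap.id (map LinearMap.id φ) (leg₁₂ (a ⊗ₜ[k] b) * leg₁₃ t))
          = a * LinearMap.mul' k H (map (LinearMap.mulRight k b) φ t) := by
      intro t
      induction t using TensorProduct.induction_on with
      | zero => simp
      | add t₁ t₂ h₁ h₂ => simp only [map_add, mul_add, h₁, h₂]
      | tmul c d => simp [Algebra.TensorProduct.tmul_mul_tmul, mul₃, mul_assoc]
    rw [key, hR.mul'_map_mulRight, LinearMap.mul'_apply, mul_assoc]

theorem mul₃_leg₁₃_mul_leg₂₃ (hR : FirstLegCentral R) (φ : H →ₗ[k] H) (s : H ⊗[k] H) :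
    mul₃ k H (map φ LinearMap.id (leg₁₃ s * leg₂₃ R))
      = LinearMap.mul' k H (map φ LinearMap.id s) * LinearMap.mul' k H R := by
  induction s using TensorProduct.induction_on with
  | zero => simp
  | add s₁ s₂ h₁ h₂ => simp only [map_add, add_mul, h₁, h₂]
  | tmul a b =>
    have key : ∀ t : H ⊗[k] H,
        mul₃ k H (map φ LinearMap.id (leg₁₃ (a ⊗ₜ[k] b) * leg₂₃ t))
          = φ a * LinearMap.mul' k H (map (LinearMap.mulRight k b) LinearMap.id t) := by
      intro t
      induction t using TensorProduct.induction_on with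
      | zero => simp
      | add t₁ t₂ h₁ h₂ => simp only [map_add, mul_add, h₁, h₂]
      | tmul c d => simp [Algebra.TensorProduct.tmul_mul_tmul, mul₃, mul_assoc]
    rw [key, hR.mul'_map_mulRight, map_id, LinearMap.id_apply, map_tmul,
      LinearMap.mul'_apply, LinearMap.id_apply, mul_assoc]

end FirstLegCentral
end Legs

namespace HopfStruct
variable {k} {H : Type*} [Ring H] [Algebra k H] (hs : HopfStruct k H)

abbrev toHopfAlgebra : HopfAlgebra k H :=
  letI : Coalgebra k H :=
    { comul := hs.Δ
      counit := hs.ε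
      coassoc := LinearMap.ext fun h => (hs.coassoc h).symm
      rTensor_counit_comp_comul := LinearMap.ext fun h => (TensorProduct.lid k H).injective <| by
        rw [LinearMap.comp_apply, TensorProduct.mk_apply, lid_tmul, one_smul]
        exact hs.counit_left h
      lTensor_counit_comp_comul := LinearMap.ext fun h => (TensorProduct.rid k H).injective <| by
        rw [LinearMap.comp_apply, LinearMap.flip_apply, TensorProduct.mk_apply, rid_tmul,
          one_smul]
        exact hs.counit_right h }
  letI : Bialgebra k H :=
    Bialgebra.mk' k H hs.counit_one (hs.counit_mul _ _) hs.comul_one (hs.comul_mul _ _)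
  { antipode := hs.S
    mul_antipode_rTensor_comul := LinearMap.ext hs.antipode_left
    mul_antipode_lTensor_comul := LinearMap.ext hs.antipode_right }

theorem S_mul (a b : H) : hs.S (a * b) = hs.S b * hs.S a :=
  letI := hs.toHopfAlgebra
  HopfAlgebra.antipode_mul_antidistrib a b

theorem S_one : hs.S 1 = 1 :=
  letI := hs.toHopfAlgebra
  HopfAlgebra.antipode_one

def comulAlgHom : H →ₐ[k] H ⊗[k] H := AlgHom.ofLinearMap hs.Δ hs.comul_one hs.comul_mul

def counitAlgHom : H →ₐ[k] k := AlgHom.ofLinearMap hs.ε hs.counit_one hs.counit_mul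

/- `id ⊗ Δ`, `assoc ∘ (Δ ⊗ id)`, `lid ∘ (ε ⊗ id)` and `rid ∘ (id ⊗ ε)` as algebra maps; applied to
an element they unfold definitionally to the linear maps in which `HopfStruct` is phrased. -/

def lTensorComul : H ⊗[k] H →ₐ[k] H ⊗[k] (H ⊗[k] H) :=
  Algebra.TensorProduct.map (AlgHom.id k H) hs.comulAlgHom

def assocRTensorComul : H ⊗[k] H →ₐ[k] H ⊗[k] (H ⊗[k] H) :=
  (Algebra.TensorProduct.assoc k k k H H H).toAlgHom.comp
    (Algebra.TensorProduct.map hs.comulAlgHom (AlgHom.id k H))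

def lidRTensorCounit : H ⊗[k] H →ₐ[k] H :=
  (Algebra.TensorProduct.lid k H).toAlgHom.comp
    (Algebra.TensorProduct.map hs.counitAlgHom (AlgHom.id k H))

def ridLTensorCounit : H ⊗[k] H →ₐ[k] H :=
  (Algebra.TensorProduct.rid k k H).toAlgHom.comp
    (Algebra.TensorProduct.map (AlgHom.id k H) hs.counitAlgHom)

theorem mul₃_id_antipode_comul (t : H ⊗[k] H) :
    mul₃ k H (map LinearMap.id (map LinearMap.id hs.S) (map LinearMap.id hs.Δ t))
      = TensorProduct.rid k H (map LinearMap.id hs.ε t) := by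
  induction t using TensorProduct.induction_on with
  | zero => simp
  | add s t h₁ h₂ => simp [h₁, h₂]
  | tmul a b => simp [mul₃_tmul, hs.antipode_right, Algebra.smul_def, Algebra.commutes]

theorem mul₃_antipode_assoc_comul (t : H ⊗[k] H) :
    mul₃ k H (map hs.S LinearMap.id (TensorProduct.assoc k H H H (map hs.Δ LinearMap.id t)))
      = TensorProduct.lid k H (map hs.ε LinearMap.id t) := by
  induction t using TensorProduct.induction_on with
  | zero => simp
  | add s t h₁ h₂ => simp [h₁, h₂]
  | tmul a b =>
    have key : ∀ x : H ⊗[k] H,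
        mul₃ k H (map hs.S LinearMap.id (TensorProduct.assoc k H H H (x ⊗ₜ[k] b)))
          = LinearMap.mul' k H (map hs.S LinearMap.id x) * b := by
      intro x
      induction x using TensorProduct.induction_on with
      | zero => simp
      | add x₁ x₂ h₁ h₂ => simp [add_tmul, add_mul, h₁, h₂]
      | tmul c d => simp [mul₃, mul_assoc]
    rw [map_tmul, LinearMap.id_apply, key, hs.antipode_left, map_tmul, LinearMap.id_apply,
      lid_tmul, Algebra.smul_def]

end HopfStruct

section Sandwich
variable {k} {H : Type*} [Ring H] [Algebra k H] (S : H →ₗ[k] H)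

def sandwichLeft (c : H) : H ⊗[k] H →ₗ[k] H :=
  LinearMap.mul' k H ∘ₗ map (LinearMap.mulRight k c ∘ₗ S) LinearMap.id

def sandwichRight (c : H) : H ⊗[k] H →ₗ[k] H :=
  LinearMap.mul' k H ∘ₗ map (LinearMap.mulRight k c) S

@[simp] theorem sandwichLeft_tmul (c x y : H) :
    sandwichLeft S c (x ⊗ₜ[k] y) = S x * c * y := rfl

@[simp] theorem sandwichRight_tmul (c x y : H) :
    sandwichRight S c (x ⊗ₜ[k] y) = x * c * S y := rfl

theorem sandwichLeft_one_eq (t : H ⊗[k] H) :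
    sandwichLeft S 1 t = LinearMap.mul' k H (map S LinearMap.id t) := by
  rw [sandwichLeft, LinearMap.mulRight_one, LinearMap.id_comp, LinearMap.comp_apply]

theorem sandwichRight_one_eq (t : H ⊗[k] H) :
    sandwichRight S 1 t = LinearMap.mul' k H (map LinearMap.id S t) := by
  rw [sandwichRight, LinearMap.mulRight_one, LinearMap.comp_apply]

theorem sandwichLeft_algebraMap (r : k) (t : H ⊗[k] H) :
    sandwichLeft S (algebraMap k H r) t = r • sandwichLeft S 1 t := by
  induction t using TensorProduct.induction_on with
  | zero => simp
  | add s t h₁ h₂ => simp [h₁, h₂]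
  | tmul x y => simp [Algebra.algebraMap_eq_smul_one]

theorem sandwichRight_algebraMap (r : k) (t : H ⊗[k] H) :
    sandwichRight S (algebraMap k H r) t = r • sandwichRight S 1 t := by
  induction t using TensorProduct.induction_on with
  | zero => simp
  | add s t h₁ h₂ => simp [h₁, h₂]
  | tmul x y => simp [Algebra.algebraMap_eq_smul_one]

variable {S}

theorem sandwichLeft_mul (hS : ∀ a b : H, S (a * b) = S b * S a) (c : H) (s t : H ⊗[k] H) :
    sandwichLeft S c (s * t) = sandwichLeft S (sandwichLeft S c s) t := by
  induction t using TensorProduct.induction_on with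
  | zero => simp
  | add t₁ t₂ h₁ h₂ => simp [mul_add, h₁, h₂]
  | tmul x y =>
    induction s using TensorProduct.induction_on with
    | zero => simp
    | add s₁ s₂ h₁ h₂ => simp_all [add_mul, mul_add]
    | tmul a b => simp [Algebra.TensorProduct.tmul_mul_tmul, hS, mul_assoc]

theorem sandwichRight_mul (hS : ∀ a b : H, S (a * b) = S b * S a) (c : H) (s t : H ⊗[k] H) :
    sandwichRight S c (s * t) = sandwichRight S (sandwichRight S c t) s := by
  induction s using TensorProduct.induction_on with
  | zero => simp
  | add s₁ s₂ h₁ h₂ => simp [add_mul, h₁, h₂]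
  | tmul a b =>
    induction t using TensorProduct.induction_on with
    | zero => simp
    | add t₁ t₂ h₁ h₂ => simp_all [add_mul, mul_add]
    | tmul x y => simp [Algebra.TensorProduct.tmul_mul_tmul, hS, mul_assoc]

theorem sandwichLeft_comul (hs : HopfStruct k H) (h : H) :
    sandwichLeft hs.S 1 (hs.Δ h) = algebraMap k H (hs.ε h) := by
  rw [sandwichLeft_one_eq, hs.antipode_left]

theorem sandwichRight_comul (hs : HopfStruct k H) (h : H) :
    sandwichRight hs.S 1 (hs.Δ h) = algebraMap k H (hs.ε h) := by
  rw [sandwichRight_one_eq, hs.antipode_right]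

end Sandwich

section Twist
variable {k} {H : Type*} [Ring H] [Algebra k H] (hs : HopfStruct k H) {R P : H ⊗[k] H}

theorem conjComul_apply (Δ : H →ₗ[k] H ⊗[k] H) (h : H) :
    conjComul k H R P Δ h = R * (Δ h * P) := rfl

theorem map_id_conjComul (Δ : H →ₗ[k] H ⊗[k] H) (t : H ⊗[k] H) :
    map LinearMap.id (conjComul k H R P Δ) t
      = leg₂₃ R * (map LinearMap.id Δ t * leg₂₃ P) := by
  induction t using TensorProduct.induction_on with
  | zero => simp
  | add s t h₁ h₂ => simp [h₁, h₂, mul_add, add_mul]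
  | tmul x y => simp [conjComul_apply, Algebra.TensorProduct.tmul_mul_tmul]

theorem assoc_map_conjComul_id (Δ : H →ₗ[k] H ⊗[k] H) (t : H ⊗[k] H) :
    TensorProduct.assoc k H H H (map (conjComul k H R P Δ) LinearMap.id t)
      = leg₁₂ R * (TensorProduct.assoc k H H H (map Δ LinearMap.id t) * leg₁₂ P) := by
  induction t using TensorProduct.induction_on with
  | zero => simp
  | add s t h₁ h₂ => simp [h₁, h₂, mul_add, add_mul]
  | tmul x y =>
    have e : (R * (Δ x * P)) ⊗ₜ[k] y
        = (R ⊗ₜ[k] (1 : H)) * ((Δ x ⊗ₜ[k] y) * (P ⊗ₜ[k] (1 : H))) := by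
      simp [Algebra.TensorProduct.tmul_mul_tmul]
    rw [map_tmul, map_tmul, conjComul_apply, LinearMap.id_apply, e, assoc_mul, assoc_mul,
      assoc_tmul_one, assoc_tmul_one]

theorem conjComul_mul (hPR : P * R = 1) (a b : H) :
    conjComul k H R P hs.Δ (a * b) = conjComul k H R P hs.Δ a * conjComul k H R P hs.Δ b := by
  simp only [conjComul_apply, hs.comul_mul, mul_assoc]
  rw [← mul_assoc P, hPR, one_mul]

theorem conjComul_one (hRP : R * P = 1) : conjComul k H R P hs.Δ 1 = 1 := by
  rw [conjComul_apply, hs.comul_one, one_mul, hRP]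

theorem conjComul_coassoc (hRP : R * P = 1) (hPR : P * R = 1)
    (hcocycle : leg₁₂ R * hs.assocRTensorComul R = leg₂₃ R * hs.lTensorComul R) (h : H) :
    map LinearMap.id (conjComul k H R P hs.Δ) (conjComul k H R P hs.Δ h)
      = TensorProduct.assoc k H H H
          (map (conjComul k H R P hs.Δ) LinearMap.id (conjComul k H R P hs.Δ h)) := by
  set f := hs.lTensorComul
  set g := hs.assocRTensorComul
  have hYX : g P * leg₁₂ P * (leg₂₃ R * f R) = 1 := by
    rw [← hcocycle, mul_assoc, ← mul_assoc (leg₁₂ P), ← map_mul, hPR, map_one, one_mul, ← map_mul,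
      hPR, map_one]
  have hXY : leg₂₃ R * f R * (f P * leg₂₃ P) = 1 := by
    rw [mul_assoc, ← mul_assoc (f R), ← map_mul, hRP, map_one, one_mul, ← map_mul, hRP,
      map_one]
  rw [map_id_conjComul, assoc_map_conjComul_id, conjComul_apply]
  change leg₂₃ R * (f (R * (hs.Δ h * P)) * leg₂₃ P)
    = leg₁₂ R * (g (R * (hs.Δ h * P)) * leg₁₂ P)
  calc _ = leg₂₃ R * f R * f (hs.Δ h) * (f P * leg₂₃ P) := by simp only [map_mul, mul_assoc]
    _ = leg₁₂ R * g R * g (hs.Δ h) * (g P * leg₁₂ P) := by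
      rw [← hcocycle, left_inv_eq_right_inv hYX hXY]
      exact congrArg (_ * · * _) (hs.coassoc h)
    _ = _ := by simp only [map_mul, mul_assoc]

theorem conjComul_counit_left (hPR : P * R = 1) (hε : hs.lidRTensorCounit R = 1) (h : H) :
    TensorProduct.lid k H (map hs.ε LinearMap.id (conjComul k H R P hs.Δ h)) = h := by
  have hP : hs.lidRTensorCounit P = 1 := map_eq_of_mul_eq_one _ hPR (by rw [hε, one_mul])
  change hs.lidRTensorCounit (R * (hs.Δ h * P)) = h
  rw [map_mul, map_mul, hε, hP, one_mul, mul_one]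
  exact hs.counit_left h

theorem conjComul_counit_right (hPR : P * R = 1) (hε : hs.ridLTensorCounit R = 1) (h : H) :
    TensorProduct.rid k H (map LinearMap.id hs.ε (conjComul k H R P hs.Δ h)) = h := by
  have hP : hs.ridLTensorCounit P = 1 := map_eq_of_mul_eq_one _ hPR (by rw [hε, one_mul])
  change hs.ridLTensorCounit (R * (hs.Δ h * P)) = h
  rw [map_mul, map_mul, hε, hP, one_mul, mul_one]
  exact hs.counit_right h

variable (R P) in
def twistAntipode : H →ₗ[k] H :=
  (LinearMap.mulLeft k (LinearMap.mul' k H (map LinearMap.id hs.S R))).comp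
    ((LinearMap.mulRight k (LinearMap.mul' k H (map hs.S LinearMap.id P))).comp hs.S)

theorem mul'_map_twistAntipode_id (t : H ⊗[k] H) :
    LinearMap.mul' k H (map (twistAntipode hs R P) LinearMap.id t)
      = LinearMap.mul' k H (map LinearMap.id hs.S R)
        * sandwichLeft hs.S (LinearMap.mul' k H (map hs.S LinearMap.id P)) t := by
  rw [twistAntipode, mul'_map_mulLeft_comp]
  rfl

theorem mul'_map_id_twistAntipode (t : H ⊗[k] H) :
    LinearMap.mul' k H (map LinearMap.id (twistAntipode hs R P) t)
      = sandwichRight hs.S (LinearMap.mul' k H (map LinearMap.id hs.S R)) t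
        * LinearMap.mul' k H (map hs.S LinearMap.id P) := by
  induction t using TensorProduct.induction_on with
  | zero => simp
  | add s t h₁ h₂ => simp [h₁, h₂, add_mul]
  | tmul x y => simp [twistAntipode, mul_assoc]

theorem twistAntipode_left (hPR : P * R = 1)
    (huw : LinearMap.mul' k H (map LinearMap.id hs.S R)
      * LinearMap.mul' k H (map hs.S LinearMap.id P) = 1) (h : H) :
    LinearMap.mul' k H (map (twistAntipode hs R P) LinearMap.id (conjComul k H R P hs.Δ h))
      = algebraMap k H (hs.ε h) := by
  have hR : sandwichLeft hs.S (LinearMap.mul' k H (map hs.S LinearMap.id P)) R = 1 := by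
    rw [← sandwichLeft_one_eq, ← sandwichLeft_mul hs.S_mul, hPR, Algebra.TensorProduct.one_def,
      sandwichLeft_tmul, hs.S_one, mul_one, mul_one]
  rw [mul'_map_twistAntipode_id, conjComul_apply, ← mul_assoc, sandwichLeft_mul hs.S_mul,
    sandwichLeft_mul hs.S_mul, hR, sandwichLeft_comul, sandwichLeft_algebraMap,
    sandwichLeft_one_eq, mul_smul_comm, huw, Algebra.algebraMap_eq_smul_one]

theorem twistAntipode_right (hPR : P * R = 1)
    (huw : LinearMap.mul' k H (map LinearMap.id hs.S R)
      * LinearMap.mul' k H (map hs.S LinearMap.id P) = 1) (h : H) :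
    LinearMap.mul' k H (map LinearMap.id (twistAntipode hs R P) (conjComul k H R P hs.Δ h))
      = algebraMap k H (hs.ε h) := by
  have hP : sandwichRight hs.S (LinearMap.mul' k H (map LinearMap.id hs.S R)) P = 1 := by
    rw [← sandwichRight_one_eq, ← sandwichRight_mul hs.S_mul, hPR,
      Algebra.TensorProduct.one_def, sandwichRight_tmul, hs.S_one, mul_one, mul_one]
  rw [mul'_map_id_twistAntipode, conjComul_apply, sandwichRight_mul hs.S_mul,
    sandwichRight_mul hs.S_mul, hP, sandwichRight_comul, sandwichRight_algebraMap,
    sandwichRight_one_eq, smul_mul_assoc, huw, Algebra.algebraMap_eq_smul_one]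

variable (R P) in
def HopfStruct.twist (hRP : R * P = 1) (hPR : P * R = 1)
    (hcocycle : leg₁₂ R * hs.assocRTensorComul R = leg₂₃ R * hs.lTensorComul R)
    (hl : hs.lidRTensorCounit R = 1) (hr : hs.ridLTensorCounit R = 1)
    (huw : LinearMap.mul' k H (map LinearMap.id hs.S R)
      * LinearMap.mul' k H (map hs.S LinearMap.id P) = 1) :
    HopfStruct k H where
  Δ := conjComul k H R P hs.Δ
  ε := hs.ε
  S := twistAntipode hs R P
  coassoc := conjComul_coassoc hs hRP hPR hcocycle
  counit_left := conjComul_counit_left hs hPR hl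
  counit_right := conjComul_counit_right hs hPR hr
  comul_mul := conjComul_mul hs hPR
  comul_one := conjComul_one hs hRP
  counit_mul := hs.counit_mul
  counit_one := hs.counit_one
  antipode_left := twistAntipode_left hs hPR huw
  antipode_right := twistAntipode_right hs hPR huw

end Twist

section LongCopairing
variable {k} {H : Type*} [Ring H] [Algebra k H] (hs : HopfStruct k H) {R : H ⊗[k] H}

theorem FirstLegCentral.cocycle (hR : FirstLegCentral R)
    (LC3 : TensorProduct.assoc k H H H (map hs.Δ LinearMap.id R) = leg₂₃ R * leg₁₃ R)
    (LC5 : map LinearMap.id hs.Δ R = leg₁₂ R * leg₁₃ R) :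
    leg₁₂ R * hs.assocRTensorComul R = leg₂₃ R * hs.lTensorComul R := by
  change leg₁₂ R * TensorProduct.assoc k H H H (map hs.Δ LinearMap.id R)
    = leg₂₃ R * map LinearMap.id hs.Δ R
  rw [LC3, LC5, ← mul_assoc, (hR.commute_leg₁₂_leg₂₃ R).eq, mul_assoc]

theorem FirstLegCentral.antipode_contractions_mul_eq_one (hR : FirstLegCentral R)
    {P : H ⊗[k] H} (hRP : R * P = 1) (hPR : P * R = 1)
    (LC2 : TensorProduct.lid k H (map hs.ε LinearMap.id R) = 1)
    (LC3 : TensorProduct.assoc k H H H (map hs.Δ LinearMap.id R) = leg₂₃ R * leg₁₃ R)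
    (LC4 : TensorProduct.rid k H (map LinearMap.id hs.ε R) = 1)
    (LC5 : map LinearMap.id hs.Δ R = leg₁₂ R * leg₁₃ R) :
    LinearMap.mul' k H (map LinearMap.id hs.S R)
      * LinearMap.mul' k H (map hs.S LinearMap.id P) = 1 := by
  have hP : FirstLegCentral P := hR.of_mul_eq_one hRP hPR
  have LC2P : TensorProduct.lid k H (map hs.ε LinearMap.id P) = 1 :=
    map_eq_of_mul_eq_one hs.lidRTensorCounit hPR
      (by rw [show hs.lidRTensorCounit R = 1 from LC2, one_mul])
  have LC3P : TensorProduct.assoc k H H H (map hs.Δ LinearMap.id P) = leg₁₃ P * leg₂₃ P :=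
    map_eq_of_mul_eq_one hs.assocRTensorComul hPR (by
      rw [show hs.assocRTensorComul R = _ from LC3, mul_assoc, ← mul_assoc (leg₁₃ R), ← map_mul,
        hRP, map_one, one_mul, ← map_mul, hRP, map_one])
  have hmR : LinearMap.mul' k H R * LinearMap.mul' k H (map LinearMap.id hs.S R) = 1 := by
    rw [← hR.mul₃_leg₁₂_mul_leg₁₃, ← LC5, hs.mul₃_id_antipode_comul, LC4]
  have hmP : LinearMap.mul' k H P * LinearMap.mul' k H R = 1 := by
    rw [← hR.mul'_mul, hPR, Algebra.TensorProduct.one_def, LinearMap.mul'_apply, mul_one]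
  have hw : LinearMap.mul' k H (map hs.S LinearMap.id P) * LinearMap.mul' k H P = 1 := by
    rw [← hP.mul₃_leg₁₃_mul_leg₂₃, ← LC3P, hs.mul₃_antipode_assoc_comul, LC2P]
  -- `u = m(R⁻¹)` and `w = m(R)`, as inverses of `m(R)` and `m(R⁻¹)`
  rw [← left_inv_eq_right_inv hmP hmR, left_inv_eq_right_inv hw hmP, hmP]

end LongCopairing

section Brace
variable {k} {H : Type*} [Ring H] [Algebra k H]

def braceInner (Δ Δ' : H →ₗ[k] H ⊗[k] H) (S : H →ₗ[k] H) : H →ₗ[k] H ⊗[k] H :=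
  LinearMap.mul' k (H ⊗[k] H) ∘ₗ map (ι₁ k H H ∘ₗ S) Δ' ∘ₗ Δ

theorem braceRHS_eq (Δ Δ' : H →ₗ[k] H ⊗[k] H) (S : H →ₗ[k] H) (h : H) :
    braceRHS k H Δ Δ' S h = LinearMap.mul' k (H ⊗[k] (H ⊗[k] H))
      (map (leg₁₂.toLinearMap ∘ₗ Δ') (leg₁₃.toLinearMap ∘ₗ braceInner Δ Δ' S) (Δ h)) := by
  have inner : ∀ t : H ⊗[k] H,
      LinearMap.mul' k (H ⊗[k] (H ⊗[k] H))
        (map (ι₁ k H (H ⊗[k] H) ∘ₗ S) (map LinearMap.id (ι₂ k H H) ∘ₗ Δ') t)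
        = leg₁₃ (LinearMap.mul' k (H ⊗[k] H) (map (ι₁ k H H ∘ₗ S) Δ' t)) := by
    intro t
    induction t using TensorProduct.induction_on with
    | zero => simp
    | add s t h₁ h₂ => simp only [map_add, h₁, h₂]
    | tmul a b =>
      rw [map_tmul, map_tmul, LinearMap.mul'_apply, LinearMap.mul'_apply, map_mul]
      rfl
  simp only [braceRHS, LinearMap.comp_apply]
  generalize Δ h = t
  induction t using TensorProduct.induction_on with
  | zero => simp
  | add s t h₁ h₂ => simp only [map_add, h₁, h₂]
  | tmul x y =>
    rw [map_tmul, map_tmul, map_tmul, LinearMap.id_apply, mul₃_tmul, inner]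
    rfl

theorem braceInner_self (hs : HopfStruct k H) (c : H) :
    braceInner hs.Δ hs.Δ hs.S c = 1 ⊗ₜ[k] c := by
  have hassoc : ∀ x : (H ⊗[k] H) ⊗[k] H,
      LinearMap.mul' k (H ⊗[k] H)
        (map (ι₁ k H H ∘ₗ hs.S) LinearMap.id (TensorProduct.assoc k H H H x))
        = map (LinearMap.mul' k H ∘ₗ map hs.S LinearMap.id) LinearMap.id x := by
    intro x
    induction x using TensorProduct.induction_on with
    | zero => simp
    | add s t h₁ h₂ => simp only [map_add, h₁, h₂]
    | tmul ab d =>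
      induction ab using TensorProduct.induction_on with
      | zero => simp
      | add s t h₁ h₂ => simp only [add_tmul, map_add, h₁, h₂]
      | tmul a b => simp [Algebra.TensorProduct.tmul_mul_tmul]
  have hcounit : ∀ x : H ⊗[k] H, map (Algebra.linearMap k H ∘ₗ hs.ε) LinearMap.id x
      = 1 ⊗ₜ[k] TensorProduct.lid k H (map hs.ε LinearMap.id x) := by
    intro x
    induction x using TensorProduct.induction_on with
    | zero => simp
    | add s t h₁ h₂ => simp only [map_add, h₁, h₂, tmul_add]
    | tmul a b => simp [Algebra.algebraMap_eq_smul_one, smul_tmul]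
  have hS : (LinearMap.mul' k H ∘ₗ map hs.S LinearMap.id) ∘ₗ hs.Δ
      = Algebra.linearMap k H ∘ₗ hs.ε := LinearMap.ext hs.antipode_left
  calc braceInner hs.Δ hs.Δ hs.S c
      = LinearMap.mul' k (H ⊗[k] H)
          (map (ι₁ k H H ∘ₗ hs.S) LinearMap.id (map LinearMap.id hs.Δ (hs.Δ c))) := by
        rw [← LinearMap.comp_apply (map _ _), ← map_comp, LinearMap.comp_id, LinearMap.id_comp]
        rfl
    _ = map (LinearMap.mul' k H ∘ₗ map hs.S LinearMap.id) LinearMap.id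
          (map hs.Δ LinearMap.id (hs.Δ c)) := by rw [hs.coassoc, hassoc]
    _ = 1 ⊗ₜ[k] c := by
        rw [← LinearMap.comp_apply (map _ _), ← map_comp, LinearMap.id_comp, hS, hcounit,
          hs.counit_left]

theorem braceRHS_self (hs : HopfStruct k H) (h : H) :
    braceRHS k H hs.Δ hs.Δ hs.S h = braceLHS k H hs.Δ hs.Δ h := by
  rw [braceRHS_eq, braceLHS, LinearMap.comp_apply, hs.coassoc]
  generalize hs.Δ h = t
  induction t using TensorProduct.induction_on with
  | zero => simp
  | add s t h₁ h₂ => simp only [map_add, h₁, h₂]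
  | tmul x y =>
    simp only [map_tmul, LinearMap.comp_apply, AlgHom.toLinearMap_apply, LinearMap.mul'_apply,
      braceInner_self, leg₁₃_tmul, LinearMap.id_apply]
    exact leg₁₂_mul_one_tmul_one_tmul _ _

variable {R P : H ⊗[k] H}

theorem braceInner_conjComul (hR : FirstLegCentral R) (Δ Δ' : H →ₗ[k] H ⊗[k] H)
    (S : H →ₗ[k] H) (c : H) :
    braceInner Δ (conjComul k H R P Δ') S c = R * (braceInner Δ Δ' S c * P) := by
  simp only [braceInner, LinearMap.comp_apply]
  generalize Δ c = t
  induction t using TensorProduct.induction_on with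
  | zero => simp
  | add s t h₁ h₂ => simp only [map_add, h₁, h₂, mul_add, add_mul]
  | tmul a b =>
    simp only [map_tmul, LinearMap.comp_apply, LinearMap.mul'_apply, conjComul_apply, ι₁_apply]
    rw [← mul_assoc, ← (hR (S a)).eq, mul_assoc, mul_assoc]

theorem braceRHS_conjComul (hR : FirstLegCentral R) (hP : FirstLegCentral P)
    (Δ Δ' : H →ₗ[k] H ⊗[k] H) (S : H →ₗ[k] H) (h : H) :
    braceRHS k H Δ (conjComul k H R P Δ') S h
      = leg₁₂ R * leg₁₃ R * braceRHS k H Δ Δ' S h * (leg₁₃ P * leg₁₂ P) := by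
  rw [braceRHS_eq, braceRHS_eq]
  generalize Δ h = t
  induction t using TensorProduct.induction_on with
  | zero => simp
  | add s t h₁ h₂ => simp only [map_add, h₁, h₂, mul_add, add_mul]
  | tmul a b =>
    simp only [map_tmul, LinearMap.comp_apply, AlgHom.toLinearMap_apply, LinearMap.mul'_apply,
      braceInner_conjComul hR, conjComul_apply, map_mul, mul_assoc]
    -- move `R₁₃` left past `P₁₂` and `Δ'(a)₁₂`, then `P₁₂` right past `(braceInner b)₁₃` and `P₁₃`
    rw [(hR.commute_leg₁₂_leg₁₃ P).left_comm, (hR.commute_leg₁₂_leg₁₃ (Δ' a)).left_comm,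
      (hP.commute_leg₁₃_leg₁₂ _).symm.left_comm, (hP.commute_leg₁₃_leg₁₂ P).symm.eq]

theorem braceLHS_conjComul (hs : HopfStruct k H) (hRP : R * P = 1) (hPR : P * R = 1)
    (LC5 : map LinearMap.id hs.Δ R = leg₁₂ R * leg₁₃ R) (Δ' : H →ₗ[k] H ⊗[k] H) (h : H) :
    braceLHS k H hs.Δ (conjComul k H R P Δ') h
      = leg₁₂ R * leg₁₃ R * braceLHS k H hs.Δ Δ' h * (leg₁₃ P * leg₁₂ P) := by
  have hP : hs.lTensorComul P = leg₁₃ P * leg₁₂ P :=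
    map_eq_of_mul_eq_one _ hPR (by
      rw [show hs.lTensorComul R = _ from LC5, mul_assoc, ← mul_assoc (leg₁₃ R), ← map_mul,
        hRP, map_one, one_mul, ← map_mul, hRP, map_one])
  change hs.lTensorComul (R * (Δ' h * P))
    = leg₁₂ R * leg₁₃ R * hs.lTensorComul (Δ' h) * (leg₁₃ P * leg₁₂ P)
  rw [map_mul, map_mul, hP, show hs.lTensorComul R = _ from LC5]
  simp only [mul_assoc]

theorem braceLHS_eq_braceRHS_conjComul (hs : HopfStruct k H) (hR : FirstLegCentral R)
    (hRP : R * P = 1) (hPR : P * R = 1) (LC5 : map LinearMap.id hs.Δ R = leg₁₂ R * leg₁₃ R)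
    {Δ' : H →ₗ[k] H ⊗[k] H}
    (hbrace : ∀ h, braceLHS k H hs.Δ Δ' h = braceRHS k H hs.Δ Δ' hs.S h) (h : H) :
    braceLHS k H hs.Δ (conjComul k H R P Δ') h
      = braceRHS k H hs.Δ (conjComul k H R P Δ') hs.S h := by
  rw [braceLHS_conjComul hs hRP hPR LC5, braceRHS_conjComul hR (hR.of_mul_eq_one hRP hPR),
    hbrace]

end Brace

/-- Example 2.3(3).  Let `(H, Δ, ε, S)` be a Hopf algebra and
`R ∈ H ⊗ H` an invertible element satisfying the Long copairing conditions
(LC1)–(LC5).  Then the conjugated comultiplication `Δ_R(h) = R Δ(h) R⁻¹` makes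
`(H, Δ_R, ε)` a Hopf algebra with antipode
`S^R(x) = R'ᵢ S(R''ᵢ) S(x) S((R'ᵢ)⁻¹) (R''ᵢ)⁻¹`, and `(H, Δ, Δ_R)` is a Hopf
brace, i.e. the compatibility (2.1) holds with first comultiplication `Δ`
(antipode `S`) and second comultiplication `Δ_R`. -/
theorem long_copaired_gives_hopf_brace {k : Type*} [Field k]
    {H : Type*} [Ring H] [Algebra k H]
    (hs : HopfStruct k H) (R Rinv : H ⊗[k] H)
    (hR₁ : R * Rinv = 1) (hR₂ : Rinv * R = 1)
    -- (LC1) : `R'ᵢ x ⊗ R''ᵢ = x R'ᵢ ⊗ R''ᵢ`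
    (LC1 : ∀ x : H, R * (x ⊗ₜ[k] (1 : H)) = (x ⊗ₜ[k] (1 : H)) * R)
    -- (LC2) : `ε(R'ᵢ) R''ᵢ = 1`
    (LC2 : TensorProduct.lid k H
      (TensorProduct.map hs.ε (LinearMap.id : H →ₗ[k] H) R) = 1)
    -- (LC3) : `(Δ ⊗ id)(R) = R'ᵢ ⊗ r'ᵢ ⊗ r''ᵢ R''ᵢ`
    (LC3 : TensorProduct.assoc k H H H
        (TensorProduct.map hs.Δ (LinearMap.id : H →ₗ[k] H) R)
      = ι₂ k H (H ⊗[k] H) R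
          * TensorProduct.map (LinearMap.id : H →ₗ[k] H) (ι₂ k H H) R)
    -- (LC4) : `R'ᵢ ε(R''ᵢ) = 1`
    (LC4 : TensorProduct.rid k H
      (TensorProduct.map (LinearMap.id : H →ₗ[k] H) hs.ε R) = 1)
    -- (LC5) : `(id ⊗ Δ)(R) = R'ᵢ r'ᵢ ⊗ R''ᵢ ⊗ r''ᵢ`
    (LC5 : TensorProduct.map (LinearMap.id : H →ₗ[k] H) hs.Δ R
      = TensorProduct.map (LinearMap.id : H →ₗ[k] H) (ι₁ k H H) R
          * TensorProduct.map (LinearMap.id : H →ₗ[k] H) (ι₂ k H H) R) :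
    -- `(H, Δ_R, ε)` is a Hopf algebra with antipode `S^R` ...
    (∃ hsR : HopfStruct k H,
      hsR.Δ = conjComul k H R Rinv hs.Δ ∧
      hsR.ε = hs.ε ∧
      hsR.S = (LinearMap.mulLeft k
            (LinearMap.mul' k H
              (TensorProduct.map (LinearMap.id : H →ₗ[k] H) hs.S R))).comp
          ((LinearMap.mulRight k
            (LinearMap.mul' k H
              (TensorProduct.map hs.S (LinearMap.id : H →ₗ[k] H) Rinv))).comp hs.S)) ∧
    -- ... and `(H, Δ, Δ_R)` is a Hopf brace:
    (∀ h : H,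
      braceLHS k H hs.Δ (conjComul k H R Rinv hs.Δ) h
        = braceRHS k H hs.Δ (conjComul k H R Rinv hs.Δ) hs.S h) := by
  have hR : FirstLegCentral R := LC1
  refine ⟨⟨hs.twist R Rinv hR₁ hR₂ (hR.cocycle hs LC3 LC5) LC2 LC4
    (hR.antipode_contractions_mul_eq_one hs hR₁ hR₂ LC2 LC3 LC4 LC5), rfl, rfl, rfl⟩, ?_⟩
  exact braceLHS_eq_braceRHS_conjComul hs hR hR₁ hR₂ LC5 fun h => (braceRHS_self hs h).symm

end HopfPaper
end
end

section
/- Let (H, Δ, Δ') be a Hopf brace with antipodes S (for Δ) and T (for Δ'). Then for all h ∈ H: (S(h_1))_{1'} h_2 ⊗ (S(h_1))_{2'} = S(h_1) h_{21'} ⊗ S(h_{22'}). -/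
open TensorProduct

noncomputable section

namespace HopfPaper

variable (k : Type*) [Field k]

section Lemma24Aux

variable {k : Type*} [Field k] {H : Type*} [Ring H] [Algebra k H]

/-- Convolution product on `Hom(H, B)` with respect to a comultiplication `Δ`. -/
def convP {B : Type*} [Ring B] [Algebra k B] (Δ : H →ₗ[k] H ⊗[k] H)
    (f g : H →ₗ[k] B) : H →ₗ[k] B :=
  (LinearMap.mul' k B).comp ((TensorProduct.map f g).comp Δ)

/-- Convolution unit. -/
def ηmap (B : Type*) [Ring B] [Algebra k B] (ε : H →ₗ[k] k) : H →ₗ[k] B :=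
  (Algebra.linearMap k B).comp ε

lemma convP_apply {B : Type*} [Ring B] [Algebra k B] (Δ : H →ₗ[k] H ⊗[k] H)
    (f g : H →ₗ[k] B) (h : H) :
    convP Δ f g h = LinearMap.mul' k B (TensorProduct.map f g (Δ h)) := rfl

lemma convP_convP_right {B : Type*} [Ring B] [Algebra k B] (Δ : H →ₗ[k] H ⊗[k] H)
    (f g e : H →ₗ[k] B) (h : H) :
    convP Δ f (convP Δ g e) h
      = mul₃ k B (TensorProduct.map f (TensorProduct.map g e)
          (TensorProduct.map (LinearMap.id : H →ₗ[k] H) Δ (Δ h))) := by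
  have h1 : (TensorProduct.map f (convP Δ g e) : H ⊗[k] H →ₗ[k] B ⊗[k] B)
      = ((TensorProduct.map (LinearMap.id : B →ₗ[k] B) (LinearMap.mul' k B)).comp
          ((TensorProduct.map f (TensorProduct.map g e)).comp
            (TensorProduct.map (LinearMap.id : H →ₗ[k] H) Δ))) := by
    ext x y
    simp [convP]
  rw [convP_apply, h1]
  simp [mul₃]

lemma convP_convP_left {B : Type*} [Ring B] [Algebra k B] (HS : HopfStruct k H)
    (f g e : H →ₗ[k] B) (h : H) :
    convP HS.Δ (convP HS.Δ f g) e h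
      = mul₃ k B (TensorProduct.map f (TensorProduct.map g e)
          (TensorProduct.map (LinearMap.id : H →ₗ[k] H) HS.Δ (HS.Δ h))) := by
  have h1 : (TensorProduct.map (convP HS.Δ f g) e : H ⊗[k] H →ₗ[k] B ⊗[k] B)
      = (TensorProduct.map ((LinearMap.mul' k B).comp (TensorProduct.map f g)) e).comp
          (TensorProduct.map HS.Δ (LinearMap.id : H →ₗ[k] H)) := by
    ext x y
    simp [convP]
  have key : (LinearMap.mul' k B).comp
        (TensorProduct.map ((LinearMap.mul' k B).comp (TensorProduct.map f g)) e)
      = ((mul₃ k B).comp (TensorProduct.map f (TensorProduct.map g e))).comp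
          (TensorProduct.assoc k H H H).toLinearMap := by
    ext x y z
    simp [mul₃, mul_assoc]
  rw [convP_apply, h1, LinearMap.comp_apply,
    ← LinearMap.comp_apply (LinearMap.mul' k B), key]
  simp only [LinearMap.comp_apply, LinearEquiv.coe_coe]
  rw [HS.coassoc h]

lemma convP_assoc {B : Type*} [Ring B] [Algebra k B] (HS : HopfStruct k H)
    (f g e : H →ₗ[k] B) :
    convP HS.Δ (convP HS.Δ f g) e = convP HS.Δ f (convP HS.Δ g e) :=
  LinearMap.ext fun h =>
    (convP_convP_left HS f g e h).trans (convP_convP_right HS.Δ f g e h).symm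

lemma one_convP {B : Type*} [Ring B] [Algebra k B] (HS : HopfStruct k H)
    (f : H →ₗ[k] B) : convP HS.Δ (ηmap B HS.ε) f = f := by
  ext h
  have h1 : (TensorProduct.map (ηmap B HS.ε) f : H ⊗[k] H →ₗ[k] B ⊗[k] B)
      = (TensorProduct.map (Algebra.linearMap k B) f).comp
          (TensorProduct.map HS.ε (LinearMap.id : H →ₗ[k] H)) := by
    ext x y
    simp [ηmap]
  have key : (LinearMap.mul' k B).comp (TensorProduct.map (Algebra.linearMap k B) f)
      = f.comp (TensorProduct.lid k H).toLinearMap := by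
    ext c
    simp [Algebra.smul_def]
  rw [convP_apply, h1, LinearMap.comp_apply,
    ← LinearMap.comp_apply (LinearMap.mul' k B), key]
  simp only [LinearMap.comp_apply, LinearEquiv.coe_coe]
  rw [HS.counit_left h]

lemma convP_id_S (HS : HopfStruct k H) :
    convP HS.Δ (LinearMap.id : H →ₗ[k] H) HS.S = ηmap H HS.ε := by
  ext h
  simpa [convP, ηmap] using HS.antipode_right h

/-- `Δ' ∘ S` is a left convolution inverse of `Δ'`. -/
lemma convP_TS (HB : HopfBrace k H) :
    convP HB.fst.Δ (HB.snd.Δ.comp HB.fst.S) HB.snd.Δ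
      = ηmap (H ⊗[k] H) HB.fst.ε := by
  ext h
  have h1 : (TensorProduct.map (HB.snd.Δ.comp HB.fst.S) HB.snd.Δ
        : H ⊗[k] H →ₗ[k] (H ⊗[k] H) ⊗[k] (H ⊗[k] H))
      = (TensorProduct.map HB.snd.Δ HB.snd.Δ).comp
          (TensorProduct.map HB.fst.S (LinearMap.id : H →ₗ[k] H)) := by
    ext x y
    simp
  have h2 : (LinearMap.mul' k (H ⊗[k] H)).comp
        (TensorProduct.map HB.snd.Δ HB.snd.Δ)
      = HB.snd.Δ.comp (LinearMap.mul' k H) := by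
    ext x y
    simp [HB.snd.comul_mul]
  rw [convP_apply, h1, LinearMap.comp_apply,
    ← LinearMap.comp_apply (LinearMap.mul' k (H ⊗[k] H)), h2]
  simp only [LinearMap.comp_apply]
  rw [HB.fst.antipode_left h]
  simp only [ηmap, LinearMap.comp_apply, Algebra.linearMap_apply,
    Algebra.algebraMap_eq_smul_one, map_smul, HB.snd.comul_one]

/-- `x ⊗ y ↦ ε(y) • x`. -/
def ecomp (ε : H →ₗ[k] k) : H ⊗[k] H →ₗ[k] H :=
  (TensorProduct.rid k H).toLinearMap.comp
    (TensorProduct.map (LinearMap.id : H →ₗ[k] H) ε)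

lemma factor_braceRHS (Δ Δ' : H →ₗ[k] H ⊗[k] H) (S : H →ₗ[k] H) (h : H) :
    braceRHS k H Δ Δ' S h
      = mul₃ k (H ⊗[k] (H ⊗[k] H))
          (TensorProduct.map
            (TensorProduct.map (LinearMap.id : H →ₗ[k] H) (ι₁ k H H))
            (TensorProduct.map (ι₁ k H (H ⊗[k] H))
              (TensorProduct.map (LinearMap.id : H →ₗ[k] H) (ι₂ k H H)))
            (TensorProduct.map Δ' (TensorProduct.map S Δ')
              (TensorProduct.map (LinearMap.id : H →ₗ[k] H) Δ (Δ h)))) := by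
  have h1 : (TensorProduct.map
        ((TensorProduct.map (LinearMap.id : H →ₗ[k] H) (ι₁ k H H)).comp Δ')
        (TensorProduct.map ((ι₁ k H (H ⊗[k] H)).comp S)
          ((TensorProduct.map (LinearMap.id : H →ₗ[k] H) (ι₂ k H H)).comp Δ'))
        : H ⊗[k] (H ⊗[k] H) →ₗ[k] _)
      = (TensorProduct.map
            (TensorProduct.map (LinearMap.id : H →ₗ[k] H) (ι₁ k H H))
            (TensorProduct.map (ι₁ k H (H ⊗[k] H))
              (TensorProduct.map (LinearMap.id : H →ₗ[k] H) (ι₂ k H H)))).comp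
          (TensorProduct.map Δ' (TensorProduct.map S Δ')) := by
    ext x y z
    simp
  simp only [braceRHS, h1, LinearMap.comp_apply]

lemma keyB (ε ε' : H →ₗ[k] k) :
    ((ecomp ε').comp
        (TensorProduct.map (LinearMap.id : H →ₗ[k] H) (ecomp ε))).comp
      ((mul₃ k (H ⊗[k] (H ⊗[k] H))).comp
        (TensorProduct.map
          (TensorProduct.map (LinearMap.id : H →ₗ[k] H) (ι₁ k H H))
          (TensorProduct.map (ι₁ k H (H ⊗[k] H))
            (TensorProduct.map (LinearMap.id : H →ₗ[k] H) (ι₂ k H H)))))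
      = (mul₃ k H).comp
          (TensorProduct.map (ecomp ε')
            (TensorProduct.map (LinearMap.id : H →ₗ[k] H) (ecomp ε))) := by
  ext x1 x2 y z1 z2
  simp [mul₃, ecomp, ι₁, ι₂, mul_smul_comm, smul_mul_assoc, smul_smul,
    mul_comm]

/-- The counit of the first structure is also a right counit for `Δ'`. -/
lemma counit_compat (HB : HopfBrace k H) (h : H) :
    TensorProduct.rid k H
      (TensorProduct.map (LinearMap.id : H →ₗ[k] H) HB.fst.ε (HB.snd.Δ h)) = h := by
  have c1 : (ecomp HB.fst.ε).comp HB.fst.Δ = LinearMap.id := by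
    ext x
    simpa [ecomp] using HB.fst.counit_right x
  have c2 : (ecomp HB.snd.ε).comp HB.snd.Δ = LinearMap.id := by
    ext x
    simpa [ecomp] using HB.snd.counit_right x
  -- left side of the compatibility under F = (ecomp ε') ∘ (id ⊗ ecomp ε)
  have hmapid : (TensorProduct.map (LinearMap.id : H →ₗ[k] H) (ecomp HB.fst.ε)).comp
      (TensorProduct.map (LinearMap.id : H →ₗ[k] H) HB.fst.Δ) = LinearMap.id := by
    rw [← TensorProduct.map_comp, c1, LinearMap.id_comp, TensorProduct.map_id]
  have hL : (ecomp HB.snd.ε)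
      ((TensorProduct.map (LinearMap.id : H →ₗ[k] H) (ecomp HB.fst.ε))
        (braceLHS k H HB.fst.Δ HB.snd.Δ h)) = h := by
    have h2 := LinearMap.congr_fun hmapid (HB.snd.Δ h)
    simp only [LinearMap.comp_apply, LinearMap.id_apply] at h2
    simp only [braceLHS, LinearMap.comp_apply]
    rw [h2]
    simpa using LinearMap.congr_fun c2 h
  -- right side
  have comb : (TensorProduct.map (ecomp HB.snd.ε)
        (TensorProduct.map (LinearMap.id : H →ₗ[k] H) (ecomp HB.fst.ε))).comp
        (TensorProduct.map HB.snd.Δ (TensorProduct.map HB.fst.S HB.snd.Δ))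
      = TensorProduct.map (LinearMap.id : H →ₗ[k] H)
          (TensorProduct.map HB.fst.S ((ecomp HB.fst.ε).comp HB.snd.Δ)) := by
    rw [← TensorProduct.map_comp, ← TensorProduct.map_comp, c2, LinearMap.id_comp]
  have hR : (ecomp HB.snd.ε)
      ((TensorProduct.map (LinearMap.id : H →ₗ[k] H) (ecomp HB.fst.ε))
        (braceRHS k H HB.fst.Δ HB.snd.Δ HB.fst.S h))
      = convP HB.fst.Δ (LinearMap.id : H →ₗ[k] H)
          (convP HB.fst.Δ HB.fst.S ((ecomp HB.fst.ε).comp HB.snd.Δ)) h := by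
    rw [factor_braceRHS, convP_convP_right]
    have h3 := LinearMap.congr_fun (keyB HB.fst.ε HB.snd.ε)
      (TensorProduct.map HB.snd.Δ (TensorProduct.map HB.fst.S HB.snd.Δ)
        (TensorProduct.map (LinearMap.id : H →ₗ[k] H) HB.fst.Δ (HB.fst.Δ h)))
    simp only [LinearMap.comp_apply] at h3
    rw [h3]
    have h4 := LinearMap.congr_fun comb
      (TensorProduct.map (LinearMap.id : H →ₗ[k] H) HB.fst.Δ (HB.fst.Δ h))
    simp only [LinearMap.comp_apply] at h4
    rw [h4]
  have hconv : convP HB.fst.Δ (LinearMap.id : H →ₗ[k] H)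
      (convP HB.fst.Δ HB.fst.S ((ecomp HB.fst.ε).comp HB.snd.Δ))
      = (ecomp HB.fst.ε).comp HB.snd.Δ := by
    rw [← convP_assoc HB.fst, convP_id_S, one_convP]
  have : h = ((ecomp HB.fst.ε).comp HB.snd.Δ) h := by
    calc h = (ecomp HB.snd.ε)
          ((TensorProduct.map (LinearMap.id : H →ₗ[k] H) (ecomp HB.fst.ε))
            (braceLHS k H HB.fst.Δ HB.snd.Δ h)) := hL.symm
      _ = (ecomp HB.snd.ε)
          ((TensorProduct.map (LinearMap.id : H →ₗ[k] H) (ecomp HB.fst.ε))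
            (braceRHS k H HB.fst.Δ HB.snd.Δ HB.fst.S h)) := by rw [HB.compat h]
      _ = convP HB.fst.Δ (LinearMap.id : H →ₗ[k] H)
          (convP HB.fst.Δ HB.fst.S ((ecomp HB.fst.ε).comp HB.snd.Δ)) h := hR
      _ = ((ecomp HB.fst.ε).comp HB.snd.Δ) h := by rw [hconv]
  simpa [ecomp] using this.symm

lemma keyC (HB : HopfBrace k H) :
    (mul₃ k (H ⊗[k] H)).comp
        (TensorProduct.map (LinearMap.id : H ⊗[k] H →ₗ[k] H ⊗[k] H)
          (TensorProduct.map (ι₁ k H H)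
            (TensorProduct.map (LinearMap.id : H →ₗ[k] H) HB.fst.S)))
      = (TensorProduct.map (LinearMap.id : H →ₗ[k] H)
            ((LinearMap.mul' k H).comp
              (TensorProduct.map (LinearMap.id : H →ₗ[k] H) HB.fst.S))).comp
          ((mul₃ k (H ⊗[k] (H ⊗[k] H))).comp
            (TensorProduct.map
              (TensorProduct.map (LinearMap.id : H →ₗ[k] H) (ι₁ k H H))
              (TensorProduct.map (ι₁ k H (H ⊗[k] H))
                (TensorProduct.map (LinearMap.id : H →ₗ[k] H) (ι₂ k H H))))) := by
  ext x1 x2 y z1 z2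
  simp [mul₃, ι₁, ι₂]

lemma stepC (HB : HopfBrace k H) :
    convP HB.fst.Δ HB.snd.Δ
        (convP HB.fst.Δ ((ι₁ k H H).comp HB.fst.S)
          ((TensorProduct.map (LinearMap.id : H →ₗ[k] H) HB.fst.S).comp HB.snd.Δ))
      = ι₁ k H H := by
  ext h
  rw [convP_convP_right]
  have h1 : (TensorProduct.map HB.snd.Δ
        (TensorProduct.map ((ι₁ k H H).comp HB.fst.S)
          ((TensorProduct.map (LinearMap.id : H →ₗ[k] H) HB.fst.S).comp HB.snd.Δ))
        : H ⊗[k] (H ⊗[k] H) →ₗ[k] _)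
      = (TensorProduct.map (LinearMap.id : H ⊗[k] H →ₗ[k] H ⊗[k] H)
            (TensorProduct.map (ι₁ k H H)
              (TensorProduct.map (LinearMap.id : H →ₗ[k] H) HB.fst.S))).comp
          (TensorProduct.map HB.snd.Δ
            (TensorProduct.map HB.fst.S HB.snd.Δ)) := by
    ext x y z
    simp
  rw [h1, LinearMap.comp_apply,
    ← LinearMap.comp_apply (mul₃ k (H ⊗[k] H)), keyC HB]
  simp only [LinearMap.comp_apply]
  rw [← factor_braceRHS, ← HB.compat h]
  simp only [braceLHS, LinearMap.comp_apply]
  have h2 : (TensorProduct.map (LinearMap.id : H →ₗ[k] H)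
        ((LinearMap.mul' k H).comp
          (TensorProduct.map (LinearMap.id : H →ₗ[k] H) HB.fst.S))).comp
        (TensorProduct.map (LinearMap.id : H →ₗ[k] H) HB.fst.Δ)
      = TensorProduct.map (LinearMap.id : H →ₗ[k] H)
          ((Algebra.linearMap k H).comp HB.fst.ε) := by
    rw [← TensorProduct.map_comp, LinearMap.id_comp]
    congr 1
    ext x
    simpa using HB.fst.antipode_right x
  have h2e := LinearMap.congr_fun h2 (HB.snd.Δ h)
  simp only [LinearMap.comp_apply] at h2e
  rw [h2e]
  have h3 : TensorProduct.map (LinearMap.id : H →ₗ[k] H)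
        ((Algebra.linearMap k H).comp HB.fst.ε)
      = (ι₁ k H H).comp ((TensorProduct.rid k H).toLinearMap.comp
          (TensorProduct.map (LinearMap.id : H →ₗ[k] H) HB.fst.ε)) := by
    ext x y
    simp [ι₁, Algebra.algebraMap_eq_smul_one, TensorProduct.smul_tmul]
  rw [h3]
  simp only [LinearMap.comp_apply, LinearEquiv.coe_coe]
  rw [counit_compat HB h]

end Lemma24Aux

/-- Lemma 2.4.  In a Hopf brace `(H, Δ, Δ')` with antipodes
`S` (for `Δ`) and `T` (for `Δ'`), equation (2.2) holds:
`(S(h_1))_{1'} h_2 ⊗ (S(h_1))_{2'} = S(h_1) h_{21'} ⊗ S(h_{22'})`. -/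
theorem lemma_2_4 {k : Type*} [Field k] {H : Type*} [Ring H] [Algebra k H]
    (HB : HopfBrace k H) :
    ∀ h : H,
      LinearMap.mul' k (H ⊗[k] H)
        (TensorProduct.map (HB.snd.Δ.comp HB.fst.S) (ι₁ k H H) (HB.fst.Δ h))
      = LinearMap.mul' k (H ⊗[k] H)
          (TensorProduct.map ((ι₁ k H H).comp HB.fst.S)
            ((TensorProduct.map (LinearMap.id : H →ₗ[k] H) HB.fst.S).comp HB.snd.Δ)
            (HB.fst.Δ h)) := by
  intro h
  have hC := stepC HB
  have main : convP HB.fst.Δ (HB.snd.Δ.comp HB.fst.S) (ι₁ k H H)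
      = convP HB.fst.Δ ((ι₁ k H H).comp HB.fst.S)
          ((TensorProduct.map (LinearMap.id : H →ₗ[k] H) HB.fst.S).comp
            HB.snd.Δ) := by
    conv_lhs => rw [← hC]
    rw [← convP_assoc HB.fst, convP_TS HB, one_convP]
  exact LinearMap.congr_fun main h

end HopfPaper
end
end

section
/- Let (H, Δ, Δ') be a Hopf brace with antipode S for Δ. Define ρ: H → H ⊗ H by ρ(h) = S(h_1) h_{21'} ⊗ h_{22'}. Then ρ makes H a left comodule coalgebra over the Hopf algebra (H, Δ', ε); explicitly: (i) (id ⊗ ρ)ρ = (Δ' ⊗ id)ρ and (ε ⊗ id)ρ = id (left (H, Δ')-comodule); (ii) writing ρ(h) = h_{(-1)} ⊗ h_{(0)}, one has h_{(-1)} ⊗ Δ(h_{(0)}) = h_{1(-1)} h_{2(-1)} ⊗ h_{1(0)} ⊗ h_{2(0)} and h_{(-1)} ε(h_{(0)}) = ε(h) 1_H. -/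
open TensorProduct

noncomputable section

namespace HopfPaper

variable (k : Type*) [Field k]

/-!
Write `⋆` for convolution with respect to `Δ`. Then `ρ = (ι₁ ∘ S) ⋆ Δ'`, and the brace
condition says that `(id ⊗ Δ) ∘ Δ'` is the convolution product of `h ↦ h_{1'} ⊗ h_{2'} ⊗ 1`,
`h ↦ S h ⊗ 1 ⊗ 1` and `h ↦ h_{1'} ⊗ 1 ⊗ h_{2'}` in `H ⊗ H ⊗ H`. Each identity is obtained by
pushing this factorisation through a suitable map and regrouping by associativity of `⋆`.

Contracting the middle leg with `ε` and then the first leg with `ε'` gives `(ε' ⊗ id) ρ = id`;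
applying `ε'` once more gives `ε' = ε`. Applying `id ⊗ Δ` gives the comodule coalgebra
condition. Coassociativity of `ρ` needs `Δ'(S h) = S(h_1) h_{21'} S(h_3) ⊗ S(h_{22'})`: the right
hand side is a right convolution inverse of `Δ'`, as one sees by multiplying the last two legs of
the brace condition after applying `S` to the third, and `Δ' ∘ S` is a left inverse.
-/

section TensorLegs

variable {k} {A B C N : Type*} [Ring A] [Algebra k A] [Ring B] [Algebra k B] [Ring N] [Algebra k N]
  [AddCommGroup C] [Module k C]

theorem ι₁_mul (x y : A) : ι₁ k A B (x * y) = ι₁ k A B x * ι₁ k A B y :=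
  map_mul (Algebra.TensorProduct.includeLeft (R := k) (S := k) (B := B)) x y

theorem ι₂_mul (x y : B) : ι₂ k A B (x * y) = ι₂ k A B x * ι₂ k A B y :=
  map_mul (Algebra.TensorProduct.includeRight (R := k) (A := A)) x y

theorem map_id_map_mul {g : B →ₗ[k] N} (hg : ∀ x y, g (x * y) = g x * g y) (x y : A ⊗[k] B) :
    map LinearMap.id g (x * y) = map LinearMap.id g x * map LinearMap.id g y :=
  LinearMap.map_mul_of_map_mul_tmul (fun _ _ _ _ => by simp [hg]) x y

theorem map_id_ι₁_mul (φ : A →ₗ[k] N) (a : A) (x : A ⊗[k] A) :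
    map LinearMap.id φ (ι₁ k A A a * x) = ι₁ k A N a * map LinearMap.id φ x := by
  induction x using TensorProduct.induction_on with
  | zero => simp
  | add x x' hx hx' => simp only [mul_add, map_add, hx, hx']
  | tmul b c => simp [ι₁]

theorem map_mul'_map_ι₁_mul_ι₂ (α γ : A →ₗ[k] N) (u v : A ⊗[k] A) :
    map LinearMap.id (LinearMap.mul' k N ∘ₗ map α γ)
        (map LinearMap.id (ι₁ k A A) u * map LinearMap.id (ι₂ k A A) v) =
      map LinearMap.id α u * map LinearMap.id γ v := by
  induction u using TensorProduct.induction_on with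
  | zero => simp
  | add u u' hu hu' => simp only [map_add, add_mul, hu, hu']
  | tmul a b =>
    induction v using TensorProduct.induction_on with
    | zero => simp
    | add v v' hv hv' => simp only [map_add, mul_add, hv, hv']
    | tmul c d => simp [ι₁, ι₂]

theorem map_id_comp_ι₁_comp {g : B →ₗ[k] N} (hg : g 1 = 1) (f : C →ₗ[k] A) :
    map LinearMap.id g ∘ₗ ι₁ k A B ∘ₗ f = ι₁ k A N ∘ₗ f := by
  ext; simp [ι₁, hg]

theorem assoc_map_comp_ι₁_comp (g : A →ₗ[k] B ⊗[k] B) (f : C →ₗ[k] A) :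
    ((TensorProduct.assoc k B B A).toLinearMap ∘ₗ map g LinearMap.id) ∘ₗ ι₁ k A A ∘ₗ f =
      map LinearMap.id (ι₁ k B A) ∘ₗ g ∘ₗ f := by
  ext x
  simp only [LinearMap.comp_apply, ι₁, LinearMap.flip_apply, TensorProduct.mk_apply, map_tmul,
    LinearMap.id_coe, id_eq]
  induction g (f x) using TensorProduct.induction_on with
  | zero => simp
  | add t t' ht ht' => simp only [TensorProduct.add_tmul, map_add, ht, ht']
  | tmul b b' => simp

theorem comp_algebraLinearMap_comp {p : A →ₗ[k] B} (hp : p 1 = 1) (e : C →ₗ[k] k) :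
    p ∘ₗ Algebra.linearMap k A ∘ₗ e = Algebra.linearMap k B ∘ₗ e := by
  ext; simp [Algebra.algebraMap_eq_smul_one, hp]

end TensorLegs

section Convolution

variable {k} {H L L' : Type*} [Ring H] [Algebra k H] [Ring L] [Algebra k L] [Ring L'] [Algebra k L']
  (HS : HopfStruct k H)

abbrev HopfStruct.toCoalgebra : Coalgebra k H where
  comul := HS.Δ
  counit := HS.ε
  coassoc := LinearMap.ext fun h => (HS.coassoc h).symm
  rTensor_counit_comp_comul := LinearMap.ext fun h => by
    simpa [LinearMap.rTensor] using congrArg (TensorProduct.lid k H).symm (HS.counit_left h)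
  lTensor_counit_comp_comul := LinearMap.ext fun h => by
    simpa [LinearMap.lTensor] using congrArg (TensorProduct.rid k H).symm (HS.counit_right h)

def HopfStruct.comulAlgHom_s3 : H →ₐ[k] H ⊗[k] H :=
  AlgHom.ofLinearMap HS.Δ HS.comul_one HS.comul_mul

def HopfStruct.counitAlgHom_s3 : H →ₐ[k] k :=
  AlgHom.ofLinearMap HS.ε HS.counit_one HS.counit_mul

def HopfStruct.conv (f g : H →ₗ[k] L) : H →ₗ[k] L :=
  LinearMap.mul' k L ∘ₗ map f g ∘ₗ HS.Δ

open WithConv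

theorem HopfStruct.conv_assoc (f g p : H →ₗ[k] L) :
    HS.conv (HS.conv f g) p = HS.conv f (HS.conv g p) :=
  letI := HS.toCoalgebra
  congrArg ofConv (mul_assoc (toConv f) (toConv g) (toConv p))

theorem HopfStruct.unit_conv (f : H →ₗ[k] L) : HS.conv (Algebra.linearMap k L ∘ₗ HS.ε) f = f :=
  letI := HS.toCoalgebra
  congrArg ofConv (one_mul (toConv f))

theorem HopfStruct.eq_of_conv_eq_unit {f g p : H →ₗ[k] L}
    (hfg : HS.conv f g = Algebra.linearMap k L ∘ₗ HS.ε)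
    (hgp : HS.conv g p = Algebra.linearMap k L ∘ₗ HS.ε) : f = p :=
  letI := HS.toCoalgebra
  congrArg ofConv <| left_inv_eq_right_inv (M := WithConv (H →ₗ[k] L))
    (congrArg toConv hfg) (congrArg toConv hgp)

theorem HopfStruct.comp_conv (p : L →ₗ[k] L') (hp : ∀ x y, p (x * y) = p x * p y)
    (f g : H →ₗ[k] L) : p ∘ₗ HS.conv f g = HS.conv (p ∘ₗ f) (p ∘ₗ g) :=
  letI := HS.toCoalgebra
  LinearMap.nonUnitalAlgHom_comp_convMul_distrib
    { p with map_mul' := hp, map_zero' := p.map_zero } (toConv f) (toConv g)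

theorem HopfStruct.antipode_conv_id :
    HS.conv HS.S LinearMap.id = Algebra.linearMap k H ∘ₗ HS.ε :=
  LinearMap.ext HS.antipode_left

theorem HopfStruct.id_conv_antipode :
    HS.conv LinearMap.id HS.S = Algebra.linearMap k H ∘ₗ HS.ε :=
  LinearMap.ext HS.antipode_right

theorem HopfStruct.conv_conv_eq_mul₃ (f g p : H →ₗ[k] L) :
    HS.conv f (HS.conv g p) =
      mul₃ k L ∘ₗ map f (map g p) ∘ₗ map LinearMap.id HS.Δ ∘ₗ HS.Δ := by
  have : map f (LinearMap.mul' k L ∘ₗ map g p ∘ₗ HS.Δ) =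
      map LinearMap.id (LinearMap.mul' k L) ∘ₗ map f (map g p) ∘ₗ map LinearMap.id HS.Δ := by
    rw [← map_comp, ← map_comp]; rfl
  simp only [HopfStruct.conv, mul₃, this, LinearMap.comp_assoc]

def HopfStruct.contractLeft : H ⊗[k] H →ₗ[k] H :=
  (TensorProduct.lid k H).toLinearMap ∘ₗ map HS.ε LinearMap.id

def HopfStruct.contractRight : H ⊗[k] H →ₗ[k] H :=
  (TensorProduct.rid k H).toLinearMap ∘ₗ map LinearMap.id HS.ε

@[simp] theorem HopfStruct.contractLeft_tmul (x y : H) :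
    HS.contractLeft (x ⊗ₜ y) = HS.ε x • y := by
  simp [HopfStruct.contractLeft]

@[simp] theorem HopfStruct.contractRight_tmul (x y : H) :
    HS.contractRight (x ⊗ₜ y) = HS.ε y • x := by
  simp [HopfStruct.contractRight]

theorem HopfStruct.contractLeft_mul (x y : H ⊗[k] H) :
    HS.contractLeft (x * y) = HS.contractLeft x * HS.contractLeft y :=
  map_mul ((Algebra.TensorProduct.lid k H).toAlgHom.comp
    (Algebra.TensorProduct.map HS.counitAlgHom_s3 (AlgHom.id k H))) x y

theorem HopfStruct.contractRight_mul (x y : H ⊗[k] H) :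
    HS.contractRight (x * y) = HS.contractRight x * HS.contractRight y :=
  map_mul ((Algebra.TensorProduct.rid k k H).toAlgHom.comp
    (Algebra.TensorProduct.map (AlgHom.id k H) HS.counitAlgHom_s3)) x y

theorem HopfStruct.contractLeft_comp_comul : HS.contractLeft ∘ₗ HS.Δ = LinearMap.id :=
  LinearMap.ext HS.counit_left

theorem HopfStruct.contractRight_comp_comul : HS.contractRight ∘ₗ HS.Δ = LinearMap.id :=
  LinearMap.ext HS.counit_right

end Convolution

section ConvolutionLegs

variable {k} {C A N : Type*} [Ring C] [Algebra k C] [Ring A] [Algebra k A] [Ring N] [Algebra k N]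
  (HS : HopfStruct k C)

theorem HopfStruct.map_mul'_comp_conv_ι₁_ι₂ (α γ : A →ₗ[k] N) (f g : C →ₗ[k] A ⊗[k] A) :
    map LinearMap.id (LinearMap.mul' k N ∘ₗ map α γ) ∘ₗ
        HS.conv (map LinearMap.id (ι₁ k A A) ∘ₗ f) (map LinearMap.id (ι₂ k A A) ∘ₗ g) =
      HS.conv (map LinearMap.id α ∘ₗ f) (map LinearMap.id γ ∘ₗ g) := by
  ext x
  simp only [HopfStruct.conv, LinearMap.comp_apply]
  induction HS.Δ x using TensorProduct.induction_on with
  | zero => simp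
  | add t t' ht ht' => simp only [map_add, ht, ht']
  | tmul a b => simpa using map_mul'_map_ι₁_mul_ι₂ α γ (f a) (g b)

theorem HopfStruct.map_id_comp_conv_ι₁ (φ : A →ₗ[k] N) (f : C →ₗ[k] A) (g : C →ₗ[k] A ⊗[k] A) :
    map LinearMap.id φ ∘ₗ HS.conv (ι₁ k A A ∘ₗ f) g =
      HS.conv (ι₁ k A N ∘ₗ f) (map LinearMap.id φ ∘ₗ g) := by
  ext x
  simp only [HopfStruct.conv, LinearMap.comp_apply]
  induction HS.Δ x using TensorProduct.induction_on with
  | zero => simp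
  | add t t' ht ht' => simp only [map_add, ht, ht']
  | tmul a b => simpa using map_id_ι₁_mul φ (f a) (g b)

end ConvolutionLegs

section Brace

variable {k} {H : Type*} [Ring H] [Algebra k H] (HB : HopfBrace k H)

local infixr:70 " ⋆ " => HB.fst.conv
local notation "ρ" => ρmap k H HB.fst.Δ HB.snd.Δ HB.fst.S

theorem HopfBrace.ρmap_eq_conv : ρ = (ι₁ k H H ∘ₗ HB.fst.S) ⋆ HB.snd.Δ := rfl

theorem HopfBrace.map_comul_comp_comul_snd_eq_conv :
    map LinearMap.id HB.fst.Δ ∘ₗ HB.snd.Δ =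
      (map LinearMap.id (ι₁ k H H) ∘ₗ HB.snd.Δ) ⋆ (ι₁ k H (H ⊗[k] H) ∘ₗ HB.fst.S) ⋆
        (map LinearMap.id (ι₂ k H H) ∘ₗ HB.snd.Δ) := by
  rw [HopfStruct.conv_conv_eq_mul₃]
  exact LinearMap.ext HB.compat

theorem HopfBrace.comul_snd_eq_conv_ρmap :
    HB.snd.Δ = (map LinearMap.id (Algebra.linearMap k H ∘ₗ HB.fst.ε) ∘ₗ HB.snd.Δ) ⋆ ρ := by
  have hι₁ : HB.fst.contractLeft ∘ₗ ι₁ k H H = Algebra.linearMap k H ∘ₗ HB.fst.ε := by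
    ext; simp [ι₁, Algebra.algebraMap_eq_smul_one]
  have hι₂ : HB.fst.contractLeft ∘ₗ ι₂ k H H = LinearMap.id := by
    ext; simp [ι₂, HB.fst.counit_one]
  have h₁ : HB.fst.contractLeft 1 = 1 := by
    simp [Algebra.TensorProduct.one_def, HB.fst.counit_one]
  have hmul := map_id_map_mul (A := H) HB.fst.contractLeft_mul
  calc HB.snd.Δ
      = map LinearMap.id HB.fst.contractLeft ∘ₗ map LinearMap.id HB.fst.Δ ∘ₗ HB.snd.Δ := by
        rw [← LinearMap.comp_assoc, ← map_comp, HB.fst.contractLeft_comp_comul]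
        simp
    _ = _ := by
      rw [map_comul_comp_comul_snd_eq_conv, HB.fst.comp_conv _ hmul, HB.fst.comp_conv _ hmul]
      simp only [← LinearMap.comp_assoc, ← map_comp, hι₁, hι₂, LinearMap.id_comp, map_id]
      rw [LinearMap.comp_assoc, map_id_comp_ι₁_comp h₁]
      rfl

theorem HopfBrace.contractLeft_snd_comp_ρmap : HB.snd.contractLeft ∘ₗ ρ = LinearMap.id := by
  have hc : HB.snd.contractLeft ∘ₗ map LinearMap.id (Algebra.linearMap k H ∘ₗ HB.fst.ε) =
      (Algebra.linearMap k H ∘ₗ HB.fst.ε) ∘ₗ HB.snd.contractLeft := by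
    ext; simp [Algebra.algebraMap_eq_smul_one, smul_smul, mul_comm]
  calc HB.snd.contractLeft ∘ₗ ρ
      = (Algebra.linearMap k H ∘ₗ HB.fst.ε) ⋆ (HB.snd.contractLeft ∘ₗ ρ) :=
        (HB.fst.unit_conv _).symm
    _ = HB.snd.contractLeft ∘ₗ HB.snd.Δ := by
      conv_rhs => rw [comul_snd_eq_conv_ρmap, HB.fst.comp_conv _ HB.snd.contractLeft_mul,
        ← LinearMap.comp_assoc, hc, LinearMap.comp_assoc, HB.snd.contractLeft_comp_comul,
        LinearMap.comp_id]
    _ = LinearMap.id := HB.snd.contractLeft_comp_comul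

theorem HopfBrace.counit_snd_eq_counit_fst : HB.snd.ε = HB.fst.ε := by
  have hS : HB.snd.ε ∘ₗ HB.snd.contractLeft ∘ₗ ι₁ k H H ∘ₗ HB.fst.S = HB.snd.ε ∘ₗ HB.fst.S := by
    ext; simp [ι₁, HB.snd.counit_one]
  have hΔ : HB.snd.ε ∘ₗ HB.snd.contractLeft ∘ₗ HB.snd.Δ = HB.snd.ε := by
    rw [HB.snd.contractLeft_comp_comul, LinearMap.comp_id]
  calc HB.snd.ε = HB.snd.ε ∘ₗ HB.snd.contractLeft ∘ₗ ρ := by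
        rw [contractLeft_snd_comp_ρmap, LinearMap.comp_id]
    _ = HB.snd.ε ∘ₗ (HB.fst.S ⋆ LinearMap.id) := by
      rw [ρmap_eq_conv, HB.fst.comp_conv _ HB.snd.contractLeft_mul,
        HB.fst.comp_conv _ HB.snd.counit_mul, HB.fst.comp_conv _ HB.snd.counit_mul]
      simp only [hS, hΔ, LinearMap.comp_id]
    _ = HB.fst.ε := by
      rw [HB.fst.antipode_conv_id]
      ext; simp [Algebra.algebraMap_eq_smul_one, HB.snd.counit_one]

theorem HopfBrace.map_unit_comp_comul_snd :
    map LinearMap.id (Algebra.linearMap k H ∘ₗ HB.fst.ε) ∘ₗ HB.snd.Δ = ι₁ k H H := by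
  have h : map LinearMap.id (Algebra.linearMap k H ∘ₗ HB.snd.ε) =
      ι₁ k H H ∘ₗ HB.snd.contractRight := by
    ext; simp [ι₁, Algebra.algebraMap_eq_smul_one, TensorProduct.tmul_smul,
      TensorProduct.smul_tmul']
  rw [← counit_snd_eq_counit_fst, h, LinearMap.comp_assoc, HB.snd.contractRight_comp_comul,
    LinearMap.comp_id]

theorem HopfBrace.contractRight_fst_comp_ρmap :
    HB.fst.contractRight ∘ₗ ρ = Algebra.linearMap k H ∘ₗ HB.fst.ε := by
  have hS : HB.fst.contractRight ∘ₗ ι₁ k H H ∘ₗ HB.fst.S = HB.fst.S := by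
    ext; simp [ι₁, HB.fst.counit_one]
  have hΔ : HB.fst.contractRight ∘ₗ HB.snd.Δ = LinearMap.id := by
    rw [← HB.snd.contractRight_comp_comul]
    simp only [HopfStruct.contractRight, counit_snd_eq_counit_fst]
  rw [ρmap_eq_conv, HB.fst.comp_conv _ HB.fst.contractRight_mul, hS, hΔ,
    HB.fst.antipode_conv_id]

theorem HopfBrace.map_comul_comp_ρmap :
    map LinearMap.id HB.fst.Δ ∘ₗ ρ = comodCoalgRHS k H H HB.fst.Δ ρ := by
  calc map LinearMap.id HB.fst.Δ ∘ₗ ρ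
      = (ι₁ k H (H ⊗[k] H) ∘ₗ HB.fst.S) ⋆ (map LinearMap.id (ι₁ k H H) ∘ₗ HB.snd.Δ) ⋆
          (ι₁ k H (H ⊗[k] H) ∘ₗ HB.fst.S) ⋆ (map LinearMap.id (ι₂ k H H) ∘ₗ HB.snd.Δ) := by
        rw [ρmap_eq_conv, HB.fst.comp_conv _ (map_id_map_mul HB.fst.comul_mul),
          map_id_comp_ι₁_comp HB.fst.comul_one, map_comul_comp_comul_snd_eq_conv]
    _ = ((ι₁ k H (H ⊗[k] H) ∘ₗ HB.fst.S) ⋆ (map LinearMap.id (ι₁ k H H) ∘ₗ HB.snd.Δ)) ⋆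
          ((ι₁ k H (H ⊗[k] H) ∘ₗ HB.fst.S) ⋆ (map LinearMap.id (ι₂ k H H) ∘ₗ HB.snd.Δ)) :=
        (HB.fst.conv_assoc _ _ _).symm
    _ = (map LinearMap.id (ι₁ k H H) ∘ₗ ρ) ⋆ (map LinearMap.id (ι₂ k H H) ∘ₗ ρ) := by
      rw [ρmap_eq_conv, HB.fst.comp_conv _ (map_id_map_mul ι₁_mul),
        HB.fst.comp_conv _ (map_id_map_mul ι₂_mul), map_id_comp_ι₁_comp rfl,
        map_id_comp_ι₁_comp rfl]

theorem HopfBrace.comul_snd_conv_antipode_conv_eq_ι₁ :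
    (HB.snd.Δ ⋆ (ι₁ k H H ∘ₗ HB.fst.S)) ⋆ (map LinearMap.id HB.fst.S ∘ₗ HB.snd.Δ) = ι₁ k H H := by
  calc _ = map LinearMap.id (LinearMap.mul' k H ∘ₗ map LinearMap.id HB.fst.S) ∘ₗ
        ((map LinearMap.id (ι₁ k H H) ∘ₗ (HB.snd.Δ ⋆ (ι₁ k H H ∘ₗ HB.fst.S))) ⋆
          (map LinearMap.id (ι₂ k H H) ∘ₗ HB.snd.Δ)) := by
        rw [HB.fst.map_mul'_comp_conv_ι₁_ι₂, map_id, LinearMap.id_comp]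
    _ = map LinearMap.id (LinearMap.mul' k H ∘ₗ map LinearMap.id HB.fst.S) ∘ₗ
        map LinearMap.id HB.fst.Δ ∘ₗ HB.snd.Δ := by
        rw [map_comul_comp_comul_snd_eq_conv, HB.fst.comp_conv _ (map_id_map_mul ι₁_mul),
          map_id_comp_ι₁_comp rfl, HB.fst.conv_assoc]
    _ = map LinearMap.id (LinearMap.id ⋆ HB.fst.S) ∘ₗ HB.snd.Δ := by
        rw [← LinearMap.comp_assoc, ← map_comp]; rfl
    _ = ι₁ k H H := by rw [HB.fst.id_conv_antipode, map_unit_comp_comul_snd]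

theorem HopfBrace.comul_snd_comp_antipode :
    HB.snd.Δ ∘ₗ HB.fst.S =
      ((ι₁ k H H ∘ₗ HB.fst.S) ⋆ (map LinearMap.id HB.fst.S ∘ₗ HB.snd.Δ)) ⋆
        (ι₁ k H H ∘ₗ HB.fst.S) := by
  refine HB.fst.eq_of_conv_eq_unit (g := HB.snd.Δ) ?_ ?_
  · calc (HB.snd.Δ ∘ₗ HB.fst.S) ⋆ HB.snd.Δ = HB.snd.Δ ∘ₗ (HB.fst.S ⋆ LinearMap.id) := by
          rw [HB.fst.comp_conv _ HB.snd.comul_mul, LinearMap.comp_id]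
      _ = _ := by rw [HB.fst.antipode_conv_id, comp_algebraLinearMap_comp HB.snd.comul_one]
  · calc HB.snd.Δ ⋆ ((ι₁ k H H ∘ₗ HB.fst.S) ⋆ (map LinearMap.id HB.fst.S ∘ₗ HB.snd.Δ)) ⋆
          (ι₁ k H H ∘ₗ HB.fst.S)
        = ι₁ k H H ⋆ (ι₁ k H H ∘ₗ HB.fst.S) := by
          rw [← HB.fst.conv_assoc, ← HB.fst.conv_assoc, comul_snd_conv_antipode_conv_eq_ι₁]
      _ = ι₁ k H H ∘ₗ (LinearMap.id ⋆ HB.fst.S) := by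
          rw [HB.fst.comp_conv _ ι₁_mul, LinearMap.comp_id]
      _ = _ := by rw [HB.fst.id_conv_antipode, comp_algebraLinearMap_comp rfl]

theorem HopfBrace.map_ρmap_comp_ρmap_eq_conv :
    map LinearMap.id ρ ∘ₗ ρ =
      (ι₁ k H (H ⊗[k] H) ∘ₗ HB.fst.S) ⋆ (map LinearMap.id (ι₁ k H H ∘ₗ HB.fst.S) ∘ₗ HB.snd.Δ) ⋆
        (ι₁ k H (H ⊗[k] H) ∘ₗ HB.fst.S) ⋆ (map LinearMap.id HB.snd.Δ ∘ₗ HB.snd.Δ) := by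
  have hbrace : map LinearMap.id HB.fst.Δ ∘ₗ HB.snd.Δ =
      (map LinearMap.id (ι₁ k H H) ∘ₗ HB.snd.Δ) ⋆ (map LinearMap.id (ι₂ k H H) ∘ₗ ρ) := by
    rw [map_comul_comp_comul_snd_eq_conv, ρmap_eq_conv,
      HB.fst.comp_conv _ (map_id_map_mul ι₂_mul), map_id_comp_ι₁_comp rfl]
  calc map LinearMap.id ρ ∘ₗ ρ
      = (ι₁ k H (H ⊗[k] H) ∘ₗ HB.fst.S) ⋆ (map LinearMap.id ρ ∘ₗ HB.snd.Δ) :=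
        HB.fst.map_id_comp_conv_ι₁ _ _ _
    _ = (ι₁ k H (H ⊗[k] H) ∘ₗ HB.fst.S) ⋆
          (map LinearMap.id
              (LinearMap.mul' k (H ⊗[k] H) ∘ₗ map (ι₁ k H H ∘ₗ HB.fst.S) HB.snd.Δ) ∘ₗ
            map LinearMap.id HB.fst.Δ ∘ₗ HB.snd.Δ) := by
        rw [← LinearMap.comp_assoc, ← map_comp]; rfl
    _ = _ := by
        rw [hbrace, HB.fst.map_mul'_comp_conv_ι₁_ι₂, ρmap_eq_conv,
          HB.fst.comp_conv _ (map_id_map_mul HB.snd.comul_mul),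
          map_id_comp_ι₁_comp HB.snd.comul_one]

theorem HopfBrace.assoc_map_comp_ρmap_eq_conv :
    (TensorProduct.assoc k H H H).toLinearMap ∘ₗ map HB.snd.Δ LinearMap.id ∘ₗ ρ =
      (((ι₁ k H (H ⊗[k] H) ∘ₗ HB.fst.S) ⋆
        (map LinearMap.id (ι₁ k H H ∘ₗ HB.fst.S) ∘ₗ HB.snd.Δ)) ⋆
        (ι₁ k H (H ⊗[k] H) ∘ₗ HB.fst.S)) ⋆ (map LinearMap.id HB.snd.Δ ∘ₗ HB.snd.Δ) := by
  have hmul := map_mul ((Algebra.TensorProduct.assoc k k k H H H).toAlgHom.comp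
    (Algebra.TensorProduct.map HB.snd.comulAlgHom_s3 (AlgHom.id k H)))
  have hcoassoc :
      ((TensorProduct.assoc k H H H).toLinearMap ∘ₗ map HB.snd.Δ LinearMap.id) ∘ₗ HB.snd.Δ =
        map LinearMap.id HB.snd.Δ ∘ₗ HB.snd.Δ :=
    LinearMap.ext fun h => (HB.snd.coassoc h).symm
  have hS : map LinearMap.id (ι₁ k H H) ∘ₗ map LinearMap.id HB.fst.S ∘ₗ HB.snd.Δ =
      map LinearMap.id (ι₁ k H H ∘ₗ HB.fst.S) ∘ₗ HB.snd.Δ := by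
    rw [← LinearMap.comp_assoc, ← map_comp, LinearMap.id_comp]
  rw [← LinearMap.comp_assoc, ρmap_eq_conv, HB.fst.comp_conv _ hmul, hcoassoc,
    assoc_map_comp_ι₁_comp, comul_snd_comp_antipode, HB.fst.comp_conv _ (map_id_map_mul ι₁_mul),
    HB.fst.comp_conv _ (map_id_map_mul ι₁_mul), map_id_comp_ι₁_comp rfl, hS]

theorem HopfBrace.map_ρmap_comp_ρmap :
    map LinearMap.id ρ ∘ₗ ρ =
      (TensorProduct.assoc k H H H).toLinearMap ∘ₗ map HB.snd.Δ LinearMap.id ∘ₗ ρ := by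
  rw [map_ρmap_comp_ρmap_eq_conv, assoc_map_comp_ρmap_eq_conv]
  simp only [HopfStruct.conv_assoc]

end Brace

/-- Lemma 2.5.  For a Hopf brace `(H, Δ, Δ')` with antipode `S`
for `Δ`, the map `ρ(h) = S(h_1) h_{21'} ⊗ h_{22'}` makes `H` a left comodule
coalgebra over the Hopf algebra `(H, Δ', ε)`:
(i) `ρ` is a coassociative counital left `(H, Δ')`-coaction, and
(ii) `h_{(-1)} ⊗ Δ(h_{(0)}) = h_{1(-1)} h_{2(-1)} ⊗ h_{1(0)} ⊗ h_{2(0)}` and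
`h_{(-1)} ε(h_{(0)}) = ε(h) 1_H`. -/
theorem lemma_2_5 {k : Type*} [Field k] {H : Type*} [Ring H] [Algebra k H]
    (HB : HopfBrace k H) :
    LeftCoaction k H H HB.snd.Δ HB.snd.ε
        (ρmap k H HB.fst.Δ HB.snd.Δ HB.fst.S) ∧
    IsComodCoalg k H H HB.fst.Δ HB.fst.ε
        (ρmap k H HB.fst.Δ HB.snd.Δ HB.fst.S) := by
  refine ⟨⟨fun h => ?_, fun h => ?_⟩, fun h => ?_, fun h => ?_⟩
  · exact LinearMap.congr_fun HB.map_ρmap_comp_ρmap h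
  · exact LinearMap.congr_fun HB.contractLeft_snd_comp_ρmap h
  · exact LinearMap.congr_fun HB.map_comul_comp_ρmap h
  · exact LinearMap.congr_fun HB.contractRight_fst_comp_ρmap h

end HopfPaper
end
end
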